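/- arXiv:1210.3202 — 6 statements merged into one kernel-verified Lean document; each statement's English description precedes it below -/
import Mathlib

section
/- Let φ be a positive expansive continuous flow without singular points on a compact metric space X. Then every point of X is stable for the inverse flow φ⁻¹, with δ uniform over X: for every ε > 0 there is δ > 0 such that whenever d(x,y) < δ there exists g = (h₁,h₂) ∈ ℋ² with d(φ_{-h₁(t)}x, φ_{-h₂(t)}y) < ε for all t ≥ 0. -/
open Metric Set

/-- A continuous flow on `X`. -/
def IsFlow {X : Type*} [TopologicalSpace X] (φ : ℝ → X → X) : Prop :=
  Continuous (fun p : ℝ × X => φ p.1 p.2) ∧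
  (∀ x, φ 0 x = x) ∧
  (∀ s t x, φ (s + t) x = φ s (φ t x))

/-- A singular point of the flow (an equilibrium). -/
def IsSingular {X : Type*} (φ : ℝ → X → X) (x : X) : Prop := ∀ t : ℝ, φ t x = x

/-- A reparameterization: an increasing homeomorphism of `ℝ` fixing `0`. -/
def Reparam (h : ℝ → ℝ) : Prop :=
  StrictMono h ∧ Continuous h ∧ Function.Surjective h ∧ h 0 = 0

/-- A reparameterization with rests: continuous, surjective, non-decreasing, fixing `0`. -/
def ReparamRest (h : ℝ → ℝ) : Prop :=
  Monotone h ∧ Continuous h ∧ Function.Surjective h ∧ h 0 = 0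

/-- Positive expansiveness in the sense of Bowen–Walters. -/
def PosExpansive {X : Type*} [MetricSpace X] (φ : ℝ → X → X) : Prop :=
  ∀ ε > (0 : ℝ), ∃ δ > (0 : ℝ), ∀ x y : X, ∀ h : ℝ → ℝ, Reparam h →
    (∀ t ≥ (0 : ℝ), dist (φ (h t) x) (φ t y) < δ) →
    ∃ s : ℝ, |s| ≤ ε ∧ y = φ s x

/-- The orbit of a point under the flow. -/
def flowOrbit {X : Type*} (φ : ℝ → X → X) (x : X) : Set X := Set.range fun t => φ t x

open Filter Topology

/-!
Work with the reversed flow `ψ t = φ (-t)`: the claim is stability of forward `ψ`-orbits up to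
rests. Let both orbits run in parallel. When they drift `2 ρ` apart, the synchronization built so
far, read backwards, synchronizes two forward `φ`-orbits for a long time; by compactness and
positive expansiveness its starting points lie nearly on a common orbit, a small time shift apart.
Letting one orbit run alone through that shift makes the pair `ρ`-close again. Every round advances
both orbits by a definite amount, and the rounds glue to a pair of reparametrizations with rests.
Absence of singular points bounds periods from below, which keeps the shifts small and, in the
limiting synchronizations, keeps either orbit from stalling.
-/

theorem exists_nonneg_eq_forall_lt {f : ℝ → ℝ} (hf : Continuous f) {c : ℝ} (h0 : f 0 < c)
    (h : ∃ t ≥ 0, c ≤ f t) : ∃ τ ≥ 0, f τ = c ∧ ∀ t ∈ Ico 0 τ, f t < c := by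
  have hivt : ∀ t ≥ 0, c ≤ f t → ∃ s ∈ Icc 0 t, f s = c := fun t ht hct =>
    intermediate_value_Icc ht hf.continuousOn ⟨h0.le, hct⟩
  set E := {t | 0 ≤ t ∧ f t = c}
  have hE : E.Nonempty := by
    obtain ⟨t, ht, hct⟩ := h
    obtain ⟨s, hs, hsc⟩ := hivt t ht hct
    exact ⟨s, hs.1, hsc⟩
  have hEb : BddBelow E := ⟨0, fun _ h => h.1⟩
  have hτ := (isClosed_Ici.inter (isClosed_eq hf continuous_const)).csInf_mem hE hEb
  refine ⟨sInf E, hτ.1, hτ.2, fun t ht => lt_of_not_ge fun hct => ?_⟩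
  obtain ⟨s, hs, hsc⟩ := hivt t ht.1 hct
  exact (csInf_le hEb ⟨hs.1, hsc⟩).not_gt (hs.2.trans_lt ht.2)

theorem exists_seq_of_forall_exists {α : Type*} {P : α → Prop} {r : α → α → Prop} {a : α}
    (ha : P a) (h : ∀ x, P x → ∃ y, P y ∧ r x y) : ∃ f : ℕ → α, ∀ n, r (f n) (f (n + 1)) := by
  choose g hg using h
  let next : {x // P x} → {x // P x} := fun x => ⟨g x.1 x.2, (hg x.1 x.2).1⟩
  refine ⟨fun n => (next^[n] ⟨a, ha⟩).1, fun n => ?_⟩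
  simp only [Function.iterate_succ_apply']
  exact (hg _ _).2

theorem exists_eqOn_of_eqOn_succ {α β : Type*} {f : ℕ → α → β} {U : ℕ → Set α}
    (hU : Monotone U) (hcover : ∀ a, ∃ n, a ∈ U n) (hf : ∀ n, EqOn (f (n + 1)) (f n) (U n)) :
    ∃ g : α → β, ∀ n, EqOn g (f n) (U n) := by
  classical
  have hle : ∀ m n, m ≤ n → EqOn (f n) (f m) (U m) := by
    intro m n hmn
    induction n, hmn using Nat.le_induction with
    | base => exact eqOn_refl _ _
    | succ n hmn ih => exact fun a ha => (hf n (hU hmn ha)).trans (ih ha)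
  refine ⟨fun a => f (Nat.find (hcover a)) a, fun n a ha => ?_⟩
  exact (hle _ n (Nat.find_min' _ ha) (Nat.find_spec (hcover a))).symm

theorem exists_strictMono_continuous_abs_le {μ : ℝ} (hμ : 0 < μ) :
    ∃ ζ : ℝ → ℝ, StrictMono ζ ∧ Continuous ζ ∧ (∀ t, |ζ t| ≤ μ) ∧ ζ 0 = 0 := by
  refine ⟨fun t => μ / 2 * Real.arctan t, Real.arctan_strictMono.const_mul (half_pos hμ),
    by fun_prop, fun t => ?_, by simp⟩
  have h := abs_lt.2 ⟨Real.neg_pi_div_two_lt_arctan t, Real.arctan_lt_pi_div_two t⟩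
  rw [abs_mul, abs_of_pos (half_pos hμ)]
  nlinarith [Real.pi_le_four, abs_nonneg (Real.arctan t)]

theorem ReparamRest.tendsto_atTop {g : ℝ → ℝ} (hg : ReparamRest g) : Tendsto g atTop atTop :=
  tendsto_atTop_atTop_of_monotone hg.1 fun b => (hg.2.2.1 b).imp fun _ h => h.ge

theorem ReparamRest.tendsto_atBot {g : ℝ → ℝ} (hg : ReparamRest g) : Tendsto g atBot atBot :=
  tendsto_atBot_atBot_of_monotone hg.1 fun b => (hg.2.2.1 b).imp fun _ h => h.le

theorem ReparamRest.reparam_add {g ζ : ℝ → ℝ} {μ : ℝ} (hg : ReparamRest g) (hζ : StrictMono ζ)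
    (hζc : Continuous ζ) (hζμ : ∀ t, |ζ t| ≤ μ) (hζ0 : ζ 0 = 0) :
    Reparam fun t => g t + ζ t := by
  have hcont : Continuous fun t => g t + ζ t := hg.2.1.add hζc
  refine ⟨hg.1.add_strictMono hζ, hcont, hcont.surjective ?_ ?_, by simp [hg.2.2.2, hζ0]⟩
  · exact tendsto_atTop_mono (fun t => by linarith [(abs_le.1 (hζμ t)).1])
      (tendsto_atTop_add_const_right _ (-μ) hg.tendsto_atTop)
  · exact tendsto_atBot_mono (fun t => by linarith [(abs_le.1 (hζμ t)).2])
      (tendsto_atBot_add_const_right _ μ hg.tendsto_atBot)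

theorem Reparam.exists_comp_eq {f g : ℝ → ℝ} (hf : Reparam f) (hg : Reparam g) :
    ∃ h, Reparam h ∧ ∀ t, h (g t) = f t := by
  set e := StrictMono.orderIsoOfSurjective g hg.1 hg.2.2.1
  have he0 : e.symm 0 = 0 := by
    simpa [hg.2.2.2] using StrictMono.orderIsoOfSurjective_symm_apply_self g hg.1 hg.2.2.1 0
  refine ⟨f ∘ e.symm, ⟨hf.1.comp e.symm.strictMono, hf.2.1.comp e.symm.continuous,
    hf.2.2.1.comp e.symm.surjective, by simp [he0, hf.2.2.2]⟩, fun t => ?_⟩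
  simp [e]

/-- A pair of reparametrizations with rests `(h₁, h₂)`, normalized so that `h₁ t + h₂ t = t`, is
encoded by `α = h₁` alone: `α t` is the time spent on the first orbit, `t - α t` on the second. -/
def IsTimeSplit (α : ℝ → ℝ) : Prop :=
  Monotone α ∧ Monotone fun t => t - α t

theorem isTimeSplit_id : IsTimeSplit id :=
  ⟨monotone_id, by simpa only [id, sub_self] using monotone_const⟩

theorem isTimeSplit_zero : IsTimeSplit 0 :=
  ⟨monotone_const, fun _ _ h => by simpa using h⟩

theorem isTimeSplit_half : IsTimeSplit (· / 2) :=
  ⟨fun _ _ h => by simp only; linarith, fun _ _ h => by simp only; linarith⟩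

theorem isClosed_setOf_isTimeSplit : IsClosed {α : ℝ → ℝ | IsTimeSplit α} :=
  isClosed_monotone.inter <| isClosed_monotone.preimage <|
    continuous_pi fun t => continuous_const.sub (continuous_apply t)

namespace IsTimeSplit

variable {α β : ℝ → ℝ}

theorem compl (hα : IsTimeSplit α) : IsTimeSplit fun t => t - α t :=
  ⟨hα.2, by simpa only [sub_sub_cancel] using hα.1⟩

theorem lipschitzWith (hα : IsTimeSplit α) : LipschitzWith 1 α := by
  refine LipschitzWith.of_le_add fun s t => ?_
  rcases le_total s t with hst | hts
  · linarith [hα.1 hst, dist_nonneg (x := s) (y := t)]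
  · linarith [hα.2 hts, Real.dist_eq s t, le_abs_self (s - t)]

theorem continuous (hα : IsTimeSplit α) : Continuous α :=
  hα.lipschitzWith.continuous

theorem abs_le_abs (hα : IsTimeSplit α) (hα0 : α 0 = 0) (t : ℝ) : |α t| ≤ |t| := by
  simpa [hα0] using hα.lipschitzWith.dist_le_mul t 0

theorem nonneg (hα : IsTimeSplit α) (hα0 : α 0 = 0) {t : ℝ} (ht : 0 ≤ t) : 0 ≤ α t :=
  hα0 ▸ hα.1 ht

theorem concat (hα : IsTimeSplit α) (hβ : IsTimeSplit β) (S : ℝ) :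
    IsTimeSplit fun t => α (min t S) + β (max t S - S) := by
  refine ⟨(hα.1.comp fun _ _ h => min_le_min_right S h).add
    (hβ.1.comp fun _ _ h => sub_le_sub_right (max_le_max_right S h) S), ?_⟩
  have hsum : ∀ t, t - (α (min t S) + β (max t S - S)) =
      (min t S - α (min t S)) + ((max t S - S) - β (max t S - S)) := fun t => by
    linarith [min_add_max t S]
  simp only [hsum]
  exact (hα.2.comp fun _ _ h => min_le_min_right S h).add
    (hβ.2.comp fun _ _ h => sub_le_sub_right (max_le_max_right S h) S)

theorem reverse (hα : IsTimeSplit α) (S : ℝ) : IsTimeSplit fun u => α S - α (S - u) := by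
  refine ⟨fun u v h => by simp only; linarith [hα.1 (show S - v ≤ S - u by linarith)],
    fun u v h => ?_⟩
  have := hα.2 (show S - v ≤ S - u by linarith)
  simp only at *
  linarith

theorem of_forall_eqOn (h : ∀ t, ∃ β, IsTimeSplit β ∧ EqOn α β (Iic t)) : IsTimeSplit α := by
  refine ⟨fun s t hst => ?_, fun s t hst => ?_⟩ <;> obtain ⟨β, hβ, hαβ⟩ := h t
  · rw [hαβ (mem_Iic.2 hst), hαβ (mem_Iic.2 le_rfl)]; exact hβ.1 hst
  · simp only; rw [hαβ (mem_Iic.2 hst), hαβ (mem_Iic.2 le_rfl)]; exact hβ.2 hst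

theorem reparamRest (hα : IsTimeSplit α) (hα0 : α 0 = 0) (htop : Tendsto α atTop atTop) :
    ReparamRest fun t => α (max t 0) + min t 0 := by
  have hcont : Continuous fun t => α (max t 0) + min t 0 := by
    have := hα.continuous; fun_prop
  refine ⟨(hα.1.comp fun _ _ h => max_le_max_right 0 h).add fun _ _ h => min_le_min_right 0 h,
    hcont, hcont.surjective ?_ ?_, by simp [hα0]⟩
  · refine htop.congr' ?_
    filter_upwards [eventually_ge_atTop 0] with t ht
    simp [ht]
  · refine tendsto_id.congr' ?_
    filter_upwards [eventually_le_atBot 0] with t ht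
    simp [ht, hα0]

/-- The rests are removed by a small strictly increasing shift `ζ` of both clocks. -/
theorem exists_reparam (hα : IsTimeSplit α) (hα0 : α 0 = 0) (h₁ : Tendsto α atTop atTop)
    (h₂ : Tendsto (fun t => t - α t) atTop atTop) {μ : ℝ} (hμ : 0 < μ) :
    ∃ h, Reparam h ∧ ∀ t ≥ 0, ∃ σ ≥ 0, ∃ ζ, |ζ| ≤ μ ∧ h t = ζ + α σ ∧ t = ζ + (σ - α σ) := by
  obtain ⟨ζ, hζ, hζc, hζμ, hζ0⟩ := exists_strictMono_continuous_abs_le hμ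
  have hf := (hα.reparamRest hα0 h₁).reparam_add hζ hζc hζμ hζ0
  have hg := (hα.compl.reparamRest (by simp [hα0]) h₂).reparam_add hζ hζc hζμ hζ0
  obtain ⟨h, hh, hhg⟩ := hf.exists_comp_eq hg
  refine ⟨h, hh, fun t ht => ?_⟩
  obtain ⟨σ, rfl⟩ := hg.2.2.1 t
  have hσ : 0 ≤ σ := hg.1.le_iff_le.1 (hg.2.2.2.trans_le ht)
  have e := hhg σ
  simp only [max_eq_left hσ, min_eq_right hσ, add_zero] at e ⊢
  exact ⟨σ, hσ, ζ σ, hζμ σ, by rw [e, add_comm], add_comm _ _⟩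

end IsTimeSplit

namespace Flow

variable {X : Type*} [MetricSpace X] (ϕ : Flow ℝ X)

theorem dist_map_map_lt {μ c : ℝ} (hμ : ∀ z u, |u| ≤ μ → dist z (ϕ u z) < c) {u : ℝ}
    (hu : |u| ≤ μ) (p q : X) : dist (ϕ u p) (ϕ u q) < dist p q + 2 * c := by
  have := dist_triangle4 (ϕ u p) p q (ϕ u q)
  linarith [dist_comm p (ϕ u p), hμ p u hu, hμ q u hu]

theorem map_abs_eq {z : X} {u : ℝ} (h : ϕ u z = z) : ϕ |u| z = z := by
  rcases abs_cases u with ⟨hu, -⟩ | ⟨hu, -⟩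
  · rwa [hu]
  · rw [hu, ← h, ← map_add, neg_add_cancel, map_zero_apply, h]

theorem dist_map_le_of_map_eq {z : X} {p ε : ℝ} (hp : 0 < p) (hpz : ϕ p z = z)
    (hε : ∀ u ∈ Ico 0 p, dist z (ϕ u z) ≤ ε) (t : ℝ) : dist z (ϕ t z) ≤ ε := by
  have hper : ∀ k : ℤ, ϕ (k * p) z = z := by
    intro k
    induction k using Int.induction_on with
    | zero => simp
    | succ k ih => rw [Int.cast_add, Int.cast_one, add_one_mul, add_comm, map_add, ih, hpz]
    | pred k ih =>
      calc ϕ (↑(-↑k - 1 : ℤ) * p) z = ϕ (↑(-↑k - 1 : ℤ) * p) (ϕ p z) := by rw [hpz]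
        _ = ϕ (↑(-↑k : ℤ) * p) z := by rw [← map_add]; push_cast; ring_nf
        _ = z := ih
  have ht : t = p * Int.fract (t / p) + ⌊t / p⌋ * p := by
    rw [Int.fract, mul_sub, mul_div_cancel₀ t hp.ne']
    ring
  rw [ht, map_add, hper]
  refine hε _ ⟨by positivity, ?_⟩
  simpa using mul_lt_mul_of_pos_left (Int.fract_lt_one (t / p)) hp

variable [CompactSpace X]

theorem uniformContinuousOn_Icc (T : ℝ) :
    UniformContinuousOn (fun p : ℝ × X => ϕ p.1 p.2) (Icc (-T) T ×ˢ univ) :=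
  (isCompact_Icc.prod isCompact_univ).uniformContinuousOn_of_continuous
    (ϕ.continuous continuous_fst continuous_snd).continuousOn

theorem exists_pos_forall_dist_lt {ε : ℝ} (hε : 0 < ε) :
    ∃ η > 0, ∀ z u, |u| ≤ η → dist z (ϕ u z) < ε := by
  obtain ⟨δ, hδ, H⟩ := Metric.uniformContinuousOn_iff.1 (ϕ.uniformContinuousOn_Icc 1) ε hε
  refine ⟨min (δ / 2) 1, by positivity, fun z u hu => ?_⟩
  have hu₁ := abs_le.1 (hu.trans (min_le_right _ _))
  have hδu : dist (0, z) (u, z) < δ := by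
    simp only [Prod.dist_eq, dist_self, Real.dist_eq, zero_sub, abs_neg]
    exact max_lt (hu.trans_lt ((min_le_left _ _).trans_lt (half_lt_self hδ))) hδ
  simpa using H (0, z) ⟨⟨by norm_num, by norm_num⟩, trivial⟩ (u, z) ⟨hu₁, trivial⟩ hδu

theorem exists_pos_forall_dist_map_lt (T : ℝ) {ε : ℝ} (hε : 0 < ε) :
    ∃ δ > 0, ∀ u, |u| ≤ T → ∀ p q, dist p q < δ → dist (ϕ u p) (ϕ u q) < ε := by
  obtain ⟨δ, hδ, H⟩ := Metric.uniformContinuousOn_iff.1 (ϕ.uniformContinuousOn_Icc T) ε hε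
  refine ⟨δ, hδ, fun u hu p q hpq =>
    H (u, p) ⟨abs_le.1 hu, trivial⟩ (u, q) ⟨abs_le.1 hu, trivial⟩ ?_⟩
  simpa [Prod.dist_eq] using hpq

theorem exists_pos_forall_le_dist {a b : ℝ} (h : ∀ z u, a ≤ |u| → |u| ≤ b → ϕ u z ≠ z) :
    ∃ ρ > 0, ∀ z u, a ≤ |u| → |u| ≤ b → ρ ≤ dist z (ϕ u z) := by
  have hK : IsCompact ({u : ℝ | a ≤ |u| ∧ |u| ≤ b} ×ˢ (univ : Set X)) := by
    refine (isCompact_Icc.of_isClosed_subset ?_ fun u hu => abs_le.1 hu.2).prod isCompact_univ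
    exact (isClosed_le continuous_const continuous_abs).inter
      (isClosed_le continuous_abs continuous_const)
  obtain ⟨ρ, hρ, H⟩ := hK.exists_forall_le' (a := 0)
    (continuous_snd.dist (ϕ.continuous continuous_fst continuous_snd)).continuousOn
    fun p hp => dist_pos.2 (h p.2 p.1 hp.1.1 hp.1.2).symm
  exact ⟨ρ, hρ, fun z u h₁ h₂ => H (u, z) ⟨⟨h₁, h₂⟩, trivial⟩⟩

/-- A limit point of points with shorter and shorter periods would be fixed. -/
theorem exists_pos_forall_map_ne (h : ∀ x, ∃ t, ϕ t x ≠ x) :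
    ∃ T > 0, ∀ z u, u ≠ 0 → |u| ≤ T → ϕ u z ≠ z := by
  by_contra! H
  set C : ℕ → Set X := fun n => ⋂ t, {z | dist z (ϕ t z) ≤ 1 / (n + 1)}
  have hC : ∀ n, (C n).Nonempty := by
    intro n
    obtain ⟨η, hη, hηz⟩ := ϕ.exists_pos_forall_dist_lt (ε := 1 / (n + 1)) (by positivity)
    obtain ⟨z, u, hu0, huη, huz⟩ := H η hη
    refine ⟨z, mem_iInter.2 fun t => ?_⟩
    refine ϕ.dist_map_le_of_map_eq (abs_pos.2 hu0) (ϕ.map_abs_eq huz) (fun v hv => ?_) t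
    exact (hηz z v ((abs_of_nonneg hv.1).trans_le (hv.2.le.trans huη))).le
  have hCc : ∀ n, IsClosed (C n) := fun n => isClosed_iInter fun t =>
    isClosed_le (continuous_id.dist (ϕ.continuous_toFun t)) continuous_const
  have hCa : ∀ n, C (n + 1) ⊆ C n := fun n => iInter_mono fun t z hz => by
    simp only [mem_ofPred_eq] at hz ⊢
    exact hz.trans (by gcongr; linarith)
  obtain ⟨z, hz⟩ := IsCompact.nonempty_iInter_of_sequence_nonempty_isCompact_isClosed C hCa hC
    (hCc 0).isCompact hCc
  obtain ⟨t, ht⟩ := h z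
  refine ht (dist_le_zero.1 (le_of_forall_pos_le_add fun ε hε => ?_)).symm
  obtain ⟨n, hn⟩ := exists_nat_one_div_lt hε
  have := mem_iInter.1 (mem_iInter.1 hz n) t
  simp only [mem_ofPred_eq] at this
  linarith

end Flow

def SyncOn {X : Type*} [MetricSpace X] (ϕ : Flow ℝ X) (Λ : ℝ) (α : ℝ → ℝ) (x y : X)
    (s : Set ℝ) : Prop :=
  ∀ t ∈ s, dist (ϕ (α t) x) (ϕ (t - α t) y) ≤ Λ

theorem SyncOn.symm {X : Type*} [MetricSpace X] {ϕ : Flow ℝ X} {Λ : ℝ} {α : ℝ → ℝ} {x y : X}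
    {s : Set ℝ} (h : SyncOn ϕ Λ α x y s) : SyncOn ϕ Λ (fun t => t - α t) y x s :=
  fun t ht => by simpa only [sub_sub_cancel, dist_comm] using h t ht

namespace Flow

variable {X : Type*} [MetricSpace X] [CompactSpace X] (ϕ : Flow ℝ X)

/-- If the second orbit stalled, the first would return within `2 Λ` of a nearly fixed point after
time `τ`, contradicting `ρ ≤ dist z (ϕ τ z)`. -/
theorem tendsto_atTop_of_syncOn {τ ρ Λ : ℝ} (hτ : 0 ≤ τ) (hρ : ∀ z, ρ ≤ dist z (ϕ τ z))
    (hΛρ : 2 * Λ < ρ) {α : ℝ → ℝ} (hα : IsTimeSplit α) {x y : X}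
    (hsync : SyncOn ϕ Λ α x y (Ici 0)) : Tendsto (fun t => t - α t) atTop atTop := by
  by_contra hβ
  have hbdd : BddAbove (range fun t => t - α t) :=
    not_not.1 fun h => hβ (tendsto_atTop_atTop_of_monotone' hα.2 h)
  set ℓ := ⨆ t, t - α t
  obtain ⟨μ, hμ, hμc⟩ := ϕ.exists_pos_forall_dist_lt (sub_pos.2 hΛρ)
  obtain ⟨R, hR⟩ := eventually_atTop.1
    ((tendsto_atTop_ciSup hα.2 hbdd).eventually (lt_mem_nhds (sub_lt_self ℓ hμ)))
  set R₀ := max R 0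
  have hαtop : Tendsto α atTop atTop :=
    tendsto_atTop_mono (fun t => by have := le_ciSup hbdd t; simp only [id] at this ⊢; linarith)
      (tendsto_atTop_add_const_right _ (-ℓ) tendsto_id)
  obtain ⟨t, hRt, hαt⟩ := intermediate_value_Ici hα.continuous.continuousOn hαtop
    (show α R₀ ≤ α R₀ + τ by linarith)
  have hmove : |(t - α t) - (R₀ - α R₀)| ≤ μ := by
    rw [abs_of_nonneg (sub_nonneg.2 (hα.2 (mem_Ici.1 hRt)))]
    linarith [le_ciSup hbdd t, hR R₀ (le_max_left R 0)]
  have hy : ϕ (t - α t) y = ϕ ((t - α t) - (R₀ - α R₀)) (ϕ (R₀ - α R₀) y) := by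
    rw [← map_add, sub_add_cancel]
  have hx : ϕ τ (ϕ (α R₀) x) = ϕ (α t) x := by rw [← map_add, hαt, add_comm]
  have h₀ : ρ ≤ dist (ϕ (α R₀) x) (ϕ (α t) x) := hx ▸ hρ _
  have h₁ := hsync R₀ (le_max_right R 0)
  have h₂ : dist (ϕ (R₀ - α R₀) y) (ϕ (t - α t) y) < ρ - 2 * Λ := by
    rw [hy]; exact hμc _ _ hmove
  have h₃ := hsync t (le_trans (le_max_right R 0) hRt)
  rw [dist_comm] at h₃
  linarith [dist_triangle4 (ϕ (α R₀) x) (ϕ (R₀ - α R₀) y) (ϕ (t - α t) y) (ϕ (α t) x)]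

/-- By `tendsto_atTop_of_syncOn` neither orbit stalls, so the rests can be removed
(`IsTimeSplit.exists_reparam`) and positive expansiveness applies. -/
theorem exists_eq_of_syncOn {δ ε τ ρ Λ : ℝ}
    (hPE : ∀ x y : X, ∀ h : ℝ → ℝ, Reparam h → (∀ t ≥ (0 : ℝ), dist (ϕ (h t) x) (ϕ t y) < δ) →
      ∃ s : ℝ, |s| ≤ ε ∧ y = ϕ s x)
    (hτ : 0 ≤ τ) (hρ : ∀ z, ρ ≤ dist z (ϕ τ z)) (hΛδ : Λ < δ) (hΛρ : 2 * Λ < ρ) {α : ℝ → ℝ}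
    (hα : IsTimeSplit α) (hα0 : α 0 = 0) {x y : X} (hsync : SyncOn ϕ Λ α x y (Ici 0)) :
    ∃ s, |s| ≤ ε ∧ y = ϕ s x := by
  have h₂ := ϕ.tendsto_atTop_of_syncOn hτ hρ hΛρ hα hsync
  have h₁ : Tendsto α atTop atTop := by
    simpa only [sub_sub_cancel] using ϕ.tendsto_atTop_of_syncOn hτ hρ hΛρ hα.compl hsync.symm
  obtain ⟨μ, hμ, hμc⟩ := ϕ.exists_pos_forall_dist_lt (half_pos (sub_pos.2 hΛδ))
  obtain ⟨h, hh, hht⟩ := hα.exists_reparam hα0 h₁ h₂ hμ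
  refine hPE x y h hh fun t ht => ?_
  obtain ⟨σ, hσ, ζ, hζ, h_eq, t_eq⟩ := hht t ht
  rw [h_eq, t_eq, map_add, map_add]
  calc _ < dist (ϕ (α σ) x) (ϕ (σ - α σ) y) + 2 * ((δ - Λ) / 2) := ϕ.dist_map_map_lt hμc hζ _ _
    _ ≤ Λ + 2 * ((δ - Λ) / 2) := by gcongr; exact hsync σ hσ
    _ = δ := by ring

end Flow

/-- A synchronization of the orbits of `x` and `y` during the total time `len`. -/
structure Trail {X : Type*} [MetricSpace X] (ϕ : Flow ℝ X) (Λ : ℝ) (x y : X) where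
  len : ℝ
  split : ℝ → ℝ
  len_nonneg : 0 ≤ len
  isTimeSplit : IsTimeSplit split
  split_zero : split 0 = 0
  syncOn : SyncOn ϕ Λ split x y (Icc 0 len)

namespace Trail

variable {X : Type*} [MetricSpace X] {ϕ : Flow ℝ X} {Λ : ℝ} {x y : X}

def timeX (T : Trail ϕ Λ x y) : ℝ := T.split T.len

def timeY (T : Trail ϕ Λ x y) : ℝ := T.len - T.split T.len

def endX (T : Trail ϕ Λ x y) : X := ϕ T.timeX x

def endY (T : Trail ϕ Λ x y) : X := ϕ T.timeY y

theorem timeX_nonneg (T : Trail ϕ Λ x y) : 0 ≤ T.timeX :=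
  T.isTimeSplit.nonneg T.split_zero T.len_nonneg

theorem timeY_nonneg (T : Trail ϕ Λ x y) : 0 ≤ T.timeY :=
  T.isTimeSplit.compl.nonneg (by simp [T.split_zero]) T.len_nonneg

def Extends (L : ℝ) (T T' : Trail ϕ Λ x y) : Prop :=
  T.len ≤ T'.len ∧ EqOn T'.split T.split (Iic T.len) ∧
    T.timeX + L ≤ T'.timeX ∧ T.timeY + L ≤ T'.timeY

theorem Extends.trans {L L' : ℝ} {T T' T'' : Trail ϕ Λ x y} (h : T.Extends L T')
    (h' : T'.Extends L' T'') : T.Extends (L + L') T'' :=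
  ⟨h.1.trans h'.1, fun _ ht => (h'.2.1 (mem_Iic.2 (le_trans ht h.1))).trans (h.2.1 ht),
    by linarith [h.2.2.1, h'.2.2.1], by linarith [h.2.2.2, h'.2.2.2]⟩

/-- The synchronization `T` followed by the synchronization `U` of its end points. -/
def append (T : Trail ϕ Λ x y) (U : Trail ϕ Λ T.endX T.endY) : Trail ϕ Λ x y where
  len := T.len + U.len
  split t := T.split (min t T.len) + U.split (max t T.len - T.len)
  len_nonneg := add_nonneg T.len_nonneg U.len_nonneg
  isTimeSplit := T.isTimeSplit.concat U.isTimeSplit T.len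
  split_zero := by simp [T.len_nonneg, T.split_zero, U.split_zero]
  syncOn t ht := by
    rcases le_total t T.len with h | h
    · simpa [min_eq_left h, max_eq_right h, U.split_zero] using T.syncOn t ⟨ht.1, h⟩
    · have hU := U.syncOn (t - T.len) ⟨sub_nonneg.2 h, by linarith [ht.2]⟩
      simp only [min_eq_right h, max_eq_left h, endX, endY, timeX, timeY, ← Flow.map_add] at hU ⊢
      convert hU using 3 <;> ring

section append

variable (T : Trail ϕ Λ x y) (U : Trail ϕ Λ T.endX T.endY)

theorem timeX_append : (T.append U).timeX = T.timeX + U.timeX := by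
  simp [append, timeX, U.len_nonneg]

theorem timeY_append : (T.append U).timeY = T.timeY + U.timeY := by
  simp only [append, timeY, le_add_iff_nonneg_right, U.len_nonneg, min_eq_right, max_eq_left,
    add_sub_cancel_left]
  ring

theorem endX_append : (T.append U).endX = U.endX := by
  rw [endX, timeX_append, add_comm, Flow.map_add]; rfl

theorem endY_append : (T.append U).endY = U.endY := by
  rw [endY, timeY_append, add_comm, Flow.map_add]; rfl

theorem extends_append {L : ℝ} (hX : L ≤ U.timeX) (hY : L ≤ U.timeY) :
    T.Extends L (T.append U) := by
  refine ⟨le_add_of_nonneg_right U.len_nonneg, fun t (ht : t ≤ T.len) => ?_, ?_, ?_⟩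
  · simp [append, min_eq_left ht, max_eq_right ht, U.split_zero]
  · rw [timeX_append]; linarith
  · rw [timeY_append]; linarith

end append

noncomputable def parallel (A B : X) {τ : ℝ} (hτ : 0 ≤ τ)
    (h : ∀ t ∈ Icc 0 τ, dist (ϕ t A) (ϕ t B) ≤ Λ) : Trail ϕ Λ A B where
  len := 2 * τ
  split := (· / 2)
  len_nonneg := by positivity
  isTimeSplit := isTimeSplit_half
  split_zero := zero_div 2
  syncOn t ht := by
    rw [show t - t / 2 = t / 2 by ring]
    exact h (t / 2) ⟨by linarith [ht.1], by linarith [ht.2]⟩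

def advanceFst (A B : X) {σ : ℝ} (hσ : 0 ≤ σ) (h : ∀ t ∈ Icc 0 σ, dist (ϕ t A) B ≤ Λ) :
    Trail ϕ Λ A B where
  len := σ
  split := id
  len_nonneg := hσ
  isTimeSplit := isTimeSplit_id
  split_zero := rfl
  syncOn t ht := by simpa using h t ht

def advanceSnd (A B : X) {σ : ℝ} (hσ : 0 ≤ σ) (h : ∀ t ∈ Icc 0 σ, dist A (ϕ t B) ≤ Λ) :
    Trail ϕ Λ A B where
  len := σ
  split := 0
  len_nonneg := hσ
  isTimeSplit := isTimeSplit_zero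
  split_zero := rfl
  syncOn t ht := by simpa using h t ht

section constructors

variable {A B : X} {σ : ℝ} (hσ : 0 ≤ σ)

@[simp] theorem timeX_parallel (h) : (parallel (ϕ := ϕ) (Λ := Λ) A B hσ h).timeX = σ := by
  simp [parallel, timeX]

@[simp] theorem timeY_parallel (h) : (parallel (ϕ := ϕ) (Λ := Λ) A B hσ h).timeY = σ := by
  simp [parallel, timeY]; ring

@[simp] theorem endX_parallel (h) : (parallel (ϕ := ϕ) (Λ := Λ) A B hσ h).endX = ϕ σ A := by
  rw [endX, timeX_parallel]

@[simp] theorem endY_parallel (h) : (parallel (ϕ := ϕ) (Λ := Λ) A B hσ h).endY = ϕ σ B := by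
  rw [endY, timeY_parallel]

@[simp] theorem endX_advanceFst (h) : (advanceFst (ϕ := ϕ) (Λ := Λ) A B hσ h).endX = ϕ σ A :=
  rfl

@[simp] theorem endY_advanceFst (h) : (advanceFst (ϕ := ϕ) (Λ := Λ) A B hσ h).endY = B := by
  simp [advanceFst, endY, timeY]

@[simp] theorem endX_advanceSnd (h) : (advanceSnd (ϕ := ϕ) (Λ := Λ) A B hσ h).endX = A := by
  simp [advanceSnd, endX, timeX]

@[simp] theorem endY_advanceSnd (h) : (advanceSnd (ϕ := ϕ) (Λ := Λ) A B hσ h).endY = ϕ σ B := by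
  simp [advanceSnd, endY, timeY]

end constructors

def reverse (T : Trail ϕ.reverse Λ x y) : Trail ϕ Λ T.endX T.endY where
  len := T.len
  split u := T.split T.len - T.split (T.len - u)
  len_nonneg := T.len_nonneg
  isTimeSplit := T.isTimeSplit.reverse T.len
  split_zero := by simp
  syncOn u hu := by
    have := T.syncOn (T.len - u) ⟨by linarith [hu.2], by linarith [hu.1]⟩
    simp only [endX, endY, timeX, timeY, Flow.reverse_apply, ← Flow.map_add] at this ⊢
    convert this using 3 <;> ring

end Trail

namespace Flow

variable {X : Type*} [MetricSpace X] (ϕ : Flow ℝ X)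

/-- Two points that are `2 ρ`-close and a small time shift `s` apart along an orbit are brought
back within `ρ` by letting one of them run alone through the shift; `hband` forces `|s| < η`. -/
theorem exists_trail_dist_lt {Λ ρ θ η T : ℝ} (hη : ∀ z u, |u| ≤ η → dist z (ϕ u z) < Λ / 2)
    (hband : ∀ z u, η ≤ |u| → |u| ≤ T → 3 * ρ ≤ dist z (ϕ u z))
    (hθ : ∀ u, |u| ≤ T → ∀ p q, dist p q < θ → dist (ϕ u p) (ϕ u q) < ρ) (hθρ : θ ≤ ρ)
    (hρΛ : 2 * ρ ≤ Λ) {A B : X} (hAB : dist A B ≤ 2 * ρ) {s : ℝ} (hs : |s| ≤ T)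
    (hsθ : dist B (ϕ s A) < θ) : ∃ U : Trail ϕ Λ A B, dist U.endX U.endY < ρ := by
  have hsη : |s| < η := by
    by_contra! h
    linarith [hband A s h hs, dist_triangle A B (ϕ s A)]
  rw [dist_comm] at hsθ
  rcases le_total 0 s with h0 | h0
  · rw [abs_of_nonneg h0] at hsη
    refine ⟨Trail.advanceFst A B h0 fun t ht => ?_, by simpa using hsθ.trans_le hθρ⟩
    have h₁ := hη (ϕ t A) (s - t) (abs_le.2 ⟨by linarith [ht.2], by linarith [ht.1]⟩)
    rw [← map_add, sub_add_cancel] at h₁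
    linarith [dist_triangle (ϕ t A) (ϕ s A) B]
  · rw [abs_of_nonpos h0] at hsη hs
    refine ⟨Trail.advanceSnd A B (neg_nonneg.2 h0) fun t ht => ?_, ?_⟩
    · have h₁ := hη A (t + s) (abs_le.2 ⟨by linarith [ht.1], by linarith [ht.2]⟩)
      have h₂ := hθ t (abs_le.2 ⟨by linarith [ht.1], by linarith [ht.2]⟩) _ _ hsθ
      rw [← map_add] at h₂
      linarith [dist_triangle A (ϕ (t + s) A) (ϕ t B)]
    · have := hθ (-s) (abs_le.2 ⟨by linarith, by linarith⟩) _ _ hsθ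
      rw [← map_add, neg_add_cancel, map_zero_apply] at this
      simpa using this

variable [CompactSpace X]

/-- By compactness: a cluster point of counterexamples, which exists because `|α t| ≤ |t|` for
every time split with `α 0 = 0`, would contradict `exists_eq_of_syncOn`. -/
theorem exists_forall_trail_exists_dist_lt {δ ε τ ρ Λ θ : ℝ}
    (hPE : ∀ x y : X, ∀ h : ℝ → ℝ, Reparam h → (∀ t ≥ (0 : ℝ), dist (ϕ (h t) x) (ϕ t y) < δ) →
      ∃ s : ℝ, |s| ≤ ε ∧ y = ϕ s x)
    (hτ : 0 ≤ τ) (hρ : ∀ z, ρ ≤ dist z (ϕ τ z)) (hΛδ : Λ < δ) (hΛρ : 2 * Λ < ρ) (hθ : 0 < θ) :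
    ∃ S, ∀ x y (T : Trail ϕ Λ x y), S ≤ T.len → ∃ s, |s| ≤ ε ∧ dist y (ϕ s x) < θ := by
  by_contra! H
  choose x y T hlen hfar using fun n : ℕ => H n
  have hK : IsCompact ((univ : Set X) ×ˢ (univ : Set X) ×ˢ pi univ fun t : ℝ => Icc (-|t|) |t|) :=
    isCompact_univ.prod (isCompact_univ.prod (isCompact_univ_pi fun _ => isCompact_Icc))
  obtain ⟨⟨x₀, y₀, α⟩, hmem, hclust⟩ := hK.exists_mapClusterPt (f := atTop)
    (u := fun n => (x n, y n, (T n).split)) <| le_principal_iff.2 <| mem_map.2 <| univ_mem'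
      fun n => ⟨trivial, trivial, fun t _ =>
        abs_le.1 ((T n).isTimeSplit.abs_le_abs (T n).split_zero t)⟩
  have hlim : ∀ C, IsClosed C → (∀ᶠ n in atTop, (x n, y n, (T n).split) ∈ C) →
      (x₀, y₀, α) ∈ C :=
    fun C hC h => hC.mem_of_mapClusterPt hclust h
  have hα : IsTimeSplit α := hlim {p | IsTimeSplit p.2.2}
    (isClosed_setOf_isTimeSplit.preimage (continuous_snd.comp continuous_snd))
    (Eventually.of_forall fun n => (T n).isTimeSplit)
  have hα0 : α 0 = 0 := by simpa using hmem.2.2 0 trivial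
  have hsync : SyncOn ϕ Λ α x₀ y₀ (Ici 0) := fun t ht =>
    hlim {p | dist (ϕ (p.2.2 t) p.1) (ϕ (t - p.2.2 t) p.2.1) ≤ Λ}
      (isClosed_le (by fun_prop) continuous_const) <| by
        filter_upwards [eventually_ge_atTop ⌈t⌉₊] with n hn
        exact (T n).syncOn t ⟨ht, (Nat.le_ceil t).trans ((Nat.cast_le.2 hn).trans (hlen n))⟩
  obtain ⟨s, hs, rfl⟩ := ϕ.exists_eq_of_syncOn hPE hτ hρ hΛδ hΛρ hα hα0 hsync
  have := hlim {p | θ ≤ dist p.2.1 (ϕ s p.1)} (isClosed_le continuous_const (by fun_prop))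
    (Eventually.of_forall fun n => hfar n s hs)
  simp only [mem_ofPred_eq, dist_self] at this
  linarith

end Flow

namespace Trail

variable {X : Type*} [MetricSpace X] {ϕ : Flow ℝ X} {Λ : ℝ} {x y : X}

def IsSafe (ρ : ℝ) (T : Trail ϕ Λ x y) : Prop :=
  ∀ t ≥ 0, dist (ϕ t T.endX) (ϕ t T.endY) < 2 * ρ

/-- Running the end points in parallel for time `t` adds `2 t` to the total time. -/
def IsGood (ρ S : ℝ) (T : Trail ϕ Λ x y) : Prop :=
  dist T.endX T.endY < ρ ∧ ∀ t ≥ 0, 2 * ρ ≤ dist (ϕ t T.endX) (ϕ t T.endY) → S ≤ T.len + 2 * t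

theorem IsSafe.exists_extends {ρ ℓ : ℝ} (hℓ : 0 ≤ ℓ) (hρΛ : 2 * ρ ≤ Λ) {T : Trail ϕ Λ x y}
    (hT : T.IsSafe ρ) : ∃ T', T'.IsSafe ρ ∧ T.Extends ℓ T' := by
  let U := parallel (ϕ := ϕ) (Λ := Λ) T.endX T.endY hℓ fun t ht => (hT t ht.1).le.trans hρΛ
  refine ⟨T.append U, fun t ht => ?_, T.extends_append U (by simp [U]) (by simp [U])⟩
  rw [endX_append, endY_append, endX_parallel, endY_parallel, ← Flow.map_add, ← Flow.map_add]
  exact hT _ (by positivity)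

/-- Run in parallel until the end points are `2 ρ` apart, which takes at least time `ℓ`; by then
the total time is at least `S`, so the end points can be resynchronized. -/
theorem IsGood.exists_extends {ρ S ℓ : ℝ} (hℓ : ∀ z u, |u| ≤ ℓ → dist z (ϕ u z) < ρ / 2)
    (hℓ0 : 0 ≤ ℓ) (hρΛ : 2 * ρ ≤ Λ)
    (hresync : ∀ T : Trail ϕ Λ x y, S ≤ T.len → dist T.endX T.endY ≤ 2 * ρ →
      ∃ U : Trail ϕ Λ T.endX T.endY, dist U.endX U.endY < ρ)
    {T : Trail ϕ Λ x y} (hT : T.IsGood ρ S) :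
    ∃ T', (T'.IsGood ρ S ∨ T'.IsSafe ρ) ∧ T.Extends ℓ T' := by
  by_cases hstuck : ∃ t ≥ 0, 2 * ρ ≤ dist (ϕ t T.endX) (ϕ t T.endY)
  swap
  · push Not at hstuck
    exact (IsSafe.exists_extends hℓ0 hρΛ hstuck).imp fun _ h => ⟨Or.inr h.1, h.2⟩
  have hρ : 0 < ρ := dist_nonneg.trans_lt hT.1
  obtain ⟨τ, hτ, hτρ, hbefore⟩ := exists_nonneg_eq_forall_lt (by fun_prop)
    (by simpa using hT.1.trans (by linarith)) hstuck
  have hℓτ : ℓ ≤ τ := by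
    by_contra! h
    have := ϕ.dist_map_map_lt hℓ (abs_le.2 ⟨by linarith, h.le⟩) T.endX T.endY
    linarith [hT.1]
  let P := parallel (ϕ := ϕ) (Λ := Λ) T.endX T.endY hτ fun t ht => by
    rcases ht.2.lt_or_eq with h | rfl
    · exact (hbefore t ⟨ht.1, h⟩).le.trans hρΛ
    · exact hτρ.le.trans hρΛ
  set T₁ := T.append P
  obtain ⟨U, hU⟩ := hresync T₁ (hT.2 τ hτ hτρ.ge) (by simp [T₁, P, endX_append, endY_append, hτρ])
  refine ⟨T₁.append U, Or.inl ⟨by rwa [endX_append T₁ U, endY_append T₁ U], fun t ht _ => ?_⟩, ?_⟩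
  · have : T₁.len ≤ (T₁.append U).len := le_add_of_nonneg_right U.len_nonneg
    linarith [hT.2 τ hτ hτρ.ge, show T₁.len = T.len + 2 * τ from rfl]
  · simpa using (T.extends_append P (by simpa [P] using hℓτ) (by simpa [P] using hℓτ)).trans
      (T₁.extends_append U U.timeX_nonneg U.timeY_nonneg)

theorem exists_reparamRest_of_extends {ℓ : ℝ} (hℓ : 0 < ℓ) (P : Trail ϕ Λ x y → Prop)
    {T₀ : Trail ϕ Λ x y} (h₀ : P T₀) (hstep : ∀ T, P T → ∃ T', P T' ∧ T.Extends ℓ T') :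
    ∃ h₁ h₂ : ℝ → ℝ, ReparamRest h₁ ∧ ReparamRest h₂ ∧
      ∀ t ≥ 0, dist (ϕ (h₁ t) x) (ϕ (h₂ t) y) ≤ Λ := by
  obtain ⟨T, hT⟩ := exists_seq_of_forall_exists h₀ hstep
  have htime : ∀ n : ℕ, n * ℓ ≤ (T n).timeX ∧ n * ℓ ≤ (T n).timeY := by
    intro n
    induction n with
    | zero => simpa using ⟨(T 0).timeX_nonneg, (T 0).timeY_nonneg⟩
    | succ n ih =>
      push_cast
      constructor <;> linarith [ih.1, ih.2, (hT n).2.2.1, (hT n).2.2.2]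
  have hlarge : ∀ b, ∃ n : ℕ, b ≤ (T n).timeX ∧ b ≤ (T n).timeY := fun b =>
    (exists_nat_ge (b / ℓ)).imp fun n hn => by
      have := (div_le_iff₀ hℓ).1 hn
      exact ⟨this.trans (htime n).1, this.trans (htime n).2⟩
  have hcover : ∀ t, ∃ n, t ∈ Iic (T n).len := fun t => (hlarge t).imp fun n hn =>
    mem_Iic.2 (by linarith [hn.2, (T n).timeX_nonneg,
      show (T n).timeY = (T n).len - (T n).timeX from rfl])
  obtain ⟨α, hα⟩ := exists_eqOn_of_eqOn_succ (f := fun n => (T n).split)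
    (monotone_nat_of_le_succ fun n => Iic_subset_Iic.2 (hT n).1) hcover fun n => (hT n).2.1
  have hsplit : IsTimeSplit α := IsTimeSplit.of_forall_eqOn fun t =>
    let ⟨n, hn⟩ := hcover t
    ⟨_, (T n).isTimeSplit, (hα n).mono (Iic_subset_Iic.2 hn)⟩
  have hα0 : α 0 = 0 := (hα 0 (mem_Iic.2 (T 0).len_nonneg)).trans (T 0).split_zero
  have hend : ∀ n, α (T n).len = (T n).timeX := fun n => hα n (mem_Iic.2 le_rfl)
  refine ⟨_, _, hsplit.reparamRest hα0 ?_, hsplit.compl.reparamRest (by simp [hα0]) ?_,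
    fun t ht => ?_⟩
  · exact tendsto_atTop_atTop_of_monotone hsplit.1 fun b =>
      let ⟨n, hn⟩ := hlarge b; ⟨(T n).len, (hend n).symm ▸ hn.1⟩
  · exact tendsto_atTop_atTop_of_monotone hsplit.2 fun b =>
      let ⟨n, hn⟩ := hlarge b; ⟨(T n).len, by simpa [hend n, timeX, timeY] using hn.2⟩
  · obtain ⟨n, hn⟩ := hcover t
    simpa [max_eq_left ht, min_eq_right ht, hα n hn] using (T n).syncOn t ⟨ht, hn⟩

end Trail

theorem Flow.exists_forall_dist_lt_exists_reparamRest {X : Type*} [MetricSpace X] [CompactSpace X]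
    (ϕ : Flow ℝ X) {Λ T : ℝ} (hΛ : 0 < Λ) (hper : ∀ z u, u ≠ 0 → |u| ≤ T → ϕ u z ≠ z)
    (hshadow : ∀ θ > 0, ∃ S, ∀ x y (U : Trail ϕ Λ x y), S ≤ U.len →
      ∃ s, |s| ≤ T ∧ dist U.endY (ϕ s U.endX) < θ) :
    ∃ δ > 0, ∀ x y, dist x y < δ → ∃ h₁ h₂ : ℝ → ℝ, ReparamRest h₁ ∧ ReparamRest h₂ ∧
      ∀ t ≥ 0, dist (ϕ (h₁ t) x) (ϕ (h₂ t) y) ≤ Λ := by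
  obtain ⟨η, hη, hηc⟩ := ϕ.exists_pos_forall_dist_lt (half_pos hΛ)
  obtain ⟨ρ₀, hρ₀, hband⟩ := ϕ.exists_pos_forall_le_dist (a := η) (b := T)
    fun z u h₁ h₂ => hper z u (abs_pos.1 (hη.trans_le h₁)) h₂
  set ρ := min (ρ₀ / 3) (Λ / 2)
  have hρ : 0 < ρ := by positivity
  have hρΛ : 2 * ρ ≤ Λ := by linarith [min_le_right (ρ₀ / 3) (Λ / 2)]
  obtain ⟨θ, hθ, hθc⟩ := ϕ.exists_pos_forall_dist_map_lt T hρ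
  obtain ⟨S, hS⟩ := hshadow (min θ ρ) (lt_min hθ hρ)
  obtain ⟨ℓ, hℓ, hℓc⟩ := ϕ.exists_pos_forall_dist_lt (half_pos hρ)
  obtain ⟨δ, hδ, hδc⟩ := ϕ.exists_pos_forall_dist_map_lt S (by positivity : 0 < 2 * ρ)
  refine ⟨min δ ρ, lt_min hδ hρ, fun x y hxy => ?_⟩
  have hxyρ : dist x y < ρ := hxy.trans_le (min_le_right _ _)
  refine Trail.exists_reparamRest_of_extends hℓ (fun T => T.IsGood ρ S ∨ T.IsSafe ρ)
    (T₀ := Trail.parallel x y le_rfl fun t ht => ?_) (Or.inl ⟨by simpa using hxyρ, ?_⟩) ?_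
  · simpa [le_antisymm ht.2 ht.1] using hxyρ.le.trans (by linarith)
  · refine fun t ht hsep => not_lt.1 fun hlt => hsep.not_gt ?_
    have : 2 * t < S := by simpa [Trail.parallel] using hlt
    simpa using hδc t (abs_le.2 ⟨by linarith, by linarith⟩) x y (hxy.trans_le (min_le_left _ _))
  rintro U (hU | hU)
  · refine hU.exists_extends hℓc hℓ.le hρΛ fun V hV hd => ?_
    obtain ⟨s, hs, hsθ⟩ := hS _ _ V hV
    exact ϕ.exists_trail_dist_lt hηc
      (fun z u h₁ h₂ => (hband z u h₁ h₂).trans' (by linarith [min_le_left (ρ₀ / 3) (Λ / 2)]))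
      (fun u hu p q hpq => hθc u hu p q (hpq.trans_le (min_le_left _ _))) (min_le_right _ _)
      hρΛ hd hs hsθ
  · exact (hU.exists_extends hℓ.le hρΛ).imp fun _ h => ⟨Or.inr h.1, h.2⟩

/-- Every point of a positive expansive flow without singular points is stable for the
inverse flow, with `δ` uniform over `X`. -/
theorem positive_expansive_uniform_inverse_stability
    {X : Type*} [MetricSpace X] [CompactSpace X] (φ : ℝ → X → X)
    (hφ : IsFlow φ) (hns : ∀ x : X, ¬ IsSingular φ x) (hexp : PosExpansive φ) :
    ∀ ε > (0 : ℝ), ∃ δ > (0 : ℝ), ∀ x y : X, dist x y < δ →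
      ∃ h₁ h₂ : ℝ → ℝ, ReparamRest h₁ ∧ ReparamRest h₂ ∧
        ∀ t ≥ (0 : ℝ), dist (φ (-(h₁ t)) x) (φ (-(h₂ t)) y) < ε := by
  intro ε hε
  let ϕ : Flow ℝ X := ⟨φ, hφ.1, hφ.2.2, hφ.2.1⟩
  obtain ⟨T, hT, hper⟩ := ϕ.exists_pos_forall_map_ne fun x => not_forall.1 (hns x)
  obtain ⟨δ, hδ, hPE⟩ := hexp T hT
  obtain ⟨ρ, hρ, hρT⟩ := ϕ.exists_pos_forall_le_dist (a := T) (b := T)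
    fun z u h₁ h₂ => hper z u (abs_pos.1 (hT.trans_le h₁)) h₂
  set Λ := min (ε / 2) (min (δ / 2) (ρ / 3))
  have hΛ : 0 < Λ := by positivity
  have hΛε : Λ < ε := by linarith [min_le_left (ε / 2) (min (δ / 2) (ρ / 3))]
  have hΛδ : Λ < δ := by
    linarith [min_le_right (ε / 2) (min (δ / 2) (ρ / 3)), min_le_left (δ / 2) (ρ / 3)]
  have hΛρ : 2 * Λ < ρ := by
    linarith [min_le_right (ε / 2) (min (δ / 2) (ρ / 3)), min_le_right (δ / 2) (ρ / 3)]
  obtain ⟨δ', hδ', hstab⟩ := ϕ.reverse.exists_forall_dist_lt_exists_reparamRest hΛ (T := T)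
    (fun z u hu hs => hper z (-u) (neg_ne_zero.2 hu) (by rwa [abs_neg])) fun θ hθ =>
    (ϕ.exists_forall_trail_exists_dist_lt hPE hT.le
      (fun z => hρT z T (abs_of_pos hT).ge (abs_of_pos hT).le) hΛδ hΛρ hθ).imp
      fun S hS x y U hU =>
        let ⟨s, hs, hsθ⟩ := hS _ _ U.reverse hU
        ⟨-s, by rwa [abs_neg], by simpa using hsθ⟩
  exact ⟨δ', hδ', fun x y hxy => (hstab x y hxy).imp fun h₁ ⟨h₂, hr₁, hr₂, hd⟩ =>
    ⟨h₂, hr₁, hr₂, fun t ht => (hd t ht).trans_lt hΛε⟩⟩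
end

section
/- Let φ be a positive expansive continuous flow without singular points on a compact metric space X. Then for all ε > 0 there is δ > 0 such that for all σ > 0 there is T > 0 with the following property: if d(x,y) < δ then there exists g = (h₁,h₂) ∈ ℋ² such that d(φ_{-h₁(t)}x, φ_{-h₂(t)}y) < ε for all t ≥ 0, and moreover d(φ_{-h₁(t)}x, φ_{-h₂(t)}y) < σ for every t ≥ 0 with h₁(t) + h₂(t) ≥ T. -/
open Metric Set

section PEDev
open Filter Topology

set_option linter.unusedSectionVars false
set_option linter.unusedVariables false
set_option linter.unusedTactic false

namespace PEProof

set_option linter.unusedSectionVars false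
set_option linter.unusedVariables false

variable {X : Type*} [MetricSpace X] [CompactSpace X] {φ : ℝ → X → X}

lemma flow_add (hφ : IsFlow φ) (s t : ℝ) (x : X) : φ (s + t) x = φ s (φ t x) := hφ.2.2 s t x

lemma flow_zero (hφ : IsFlow φ) (x : X) : φ 0 x = x := hφ.2.1 x

lemma flow_cancel (hφ : IsFlow φ) (t : ℝ) (x : X) : φ (-t) (φ t x) = x := by
  rw [← flow_add hφ, neg_add_cancel, flow_zero hφ]

lemma flow_cont (hφ : IsFlow φ) : Continuous (fun p : ℝ × X => φ p.1 p.2) := hφ.1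

lemma flow_cont_pt (hφ : IsFlow φ) (x : X) : Continuous (fun t : ℝ => φ t x) :=
  (flow_cont hφ).comp (continuous_id.prodMk continuous_const)

lemma flow_cont_t (hφ : IsFlow φ) (t : ℝ) : Continuous (fun x : X => φ t x) :=
  (flow_cont hφ).comp (continuous_const.prodMk continuous_id)

/-- Uniform continuity in space, over a bounded set of times. -/
lemma unif_space (hφ : IsFlow φ) (L η : ℝ) (hL : 0 < L) (hη : 0 < η) :
    ∃ ζ > 0, ∀ a b : X, ∀ s : ℝ, dist a b ≤ ζ → |s| ≤ L → dist (φ s a) (φ s b) < η := by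
  have hK : IsCompact (Set.Icc (-L) L ×ˢ (Set.univ : Set X)) :=
    (isCompact_Icc).prod isCompact_univ
  have hUC := hK.uniformContinuousOn_of_continuous ((flow_cont hφ).continuousOn)
  rw [Metric.uniformContinuousOn_iff] at hUC
  obtain ⟨ζ, hζ, H⟩ := hUC η hη
  refine ⟨ζ / 2, by positivity, ?_⟩
  intro a b s hab hs
  have hsmem : s ∈ Set.Icc (-L) L := by
    rcases abs_le.mp hs with ⟨h1, h2⟩; exact ⟨h1, h2⟩
  have := H (s, a) ⟨hsmem, trivial⟩ (s, b) ⟨hsmem, trivial⟩ ?_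
  · exact this
  · rw [Prod.dist_eq]
    simp only [dist_self]
    have : dist a b < ζ := lt_of_le_of_lt hab (by linarith)
    exact max_lt (by linarith) this

/-- Uniform continuity in time (uniformly in the point). -/
lemma unif_time (hφ : IsFlow φ) (η : ℝ) (hη : 0 < η) :
    ∃ θ > 0, θ ≤ 1 ∧ ∀ (z : X) (s : ℝ), |s| ≤ θ → dist (φ s z) z < η := by
  have hK : IsCompact (Set.Icc (-(1:ℝ)) 1 ×ˢ (Set.univ : Set X)) :=
    (isCompact_Icc).prod isCompact_univ
  have hUC := hK.uniformContinuousOn_of_continuous ((flow_cont hφ).continuousOn)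
  rw [Metric.uniformContinuousOn_iff] at hUC
  obtain ⟨ζ, hζ, H⟩ := hUC η hη
  refine ⟨min (ζ / 2) 1, by positivity, min_le_right _ _, ?_⟩
  intro z s hs
  have hs1 : |s| ≤ 1 := le_trans hs (min_le_right _ _)
  have hsmem : s ∈ Set.Icc (-(1:ℝ)) 1 := by
    rcases abs_le.mp hs1 with ⟨h1, h2⟩; exact ⟨h1, h2⟩
  have h0mem : (0:ℝ) ∈ Set.Icc (-(1:ℝ)) 1 := by constructor <;> norm_num
  have := H (s, z) ⟨hsmem, trivial⟩ (0, z) ⟨h0mem, trivial⟩ ?_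
  · simpa [flow_zero hφ] using this
  · rw [Prod.dist_eq]
    simp only [dist_self]
    have : dist s 0 < ζ := by
      rw [Real.dist_eq, sub_zero]
      exact lt_of_le_of_lt (le_trans hs (min_le_left _ _)) (by linarith)
    exact max_lt this hζ

/-- From nonsingularity and compactness: a uniform separation along orbits. -/
lemma exists_sep (hφ : IsFlow φ) (hns : ∀ x : X, ¬ IsSingular φ x) :
    ∃ r > 0, ∃ T > 0, ∀ z : X, ∃ t : ℝ, 0 < t ∧ t ≤ T ∧ r ≤ dist (φ t z) z := by
  rcases isEmpty_or_nonempty X with hX | hX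
  · exact ⟨1, one_pos, 1, one_pos, fun z => (IsEmpty.false z).elim⟩
  have key : ∀ z : X, ∃ t : ℝ, 0 < t ∧ 0 < dist (φ t z) z := by
    intro z
    have h1 := hns z
    rw [IsSingular] at h1
    push_neg at h1
    obtain ⟨t, ht⟩ := h1
    rcases lt_trichotomy t 0 with h | h | h
    · refine ⟨-t, by linarith, ?_⟩
      rw [dist_pos]
      intro hEq
      apply ht
      have h2 : φ t (φ (-t) z) = φ t z := by rw [hEq]
      rw [← flow_add hφ, add_neg_cancel, flow_zero hφ] at h2
      exact h2.symm
    · exact absurd (h ▸ flow_zero hφ z) ht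
    · exact ⟨t, h, dist_pos.mpr ht⟩
  choose tz htz hdz using key
  have hopen : ∀ z : X, IsOpen {w : X | dist (φ (tz z) z) z / 2 < dist (φ (tz z) w) w} := by
    intro z
    have hc : Continuous (fun w : X => dist (φ (tz z) w) w) :=
      (flow_cont_t hφ (tz z)).dist continuous_id
    exact isOpen_lt continuous_const hc
  have hcover : (Set.univ : Set X) ⊆ ⋃ z : X, {w : X | dist (φ (tz z) z) z / 2 < dist (φ (tz z) w) w} := by
    intro w _
    exact Set.mem_iUnion.mpr ⟨w, by simpa using half_lt_self (hdz w)⟩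
  obtain ⟨F, hF⟩ := isCompact_univ.elim_finite_subcover _ hopen hcover
  have hFne : F.Nonempty := by
    by_contra hne
    rw [Finset.not_nonempty_iff_eq_empty] at hne
    obtain ⟨w⟩ := hX
    have := hF (Set.mem_univ w)
    simp [hne] at this
  refine ⟨F.inf' hFne (fun z => dist (φ (tz z) z) z / 2), ?_, F.sup' hFne tz, ?_, ?_⟩
  · rw [gt_iff_lt, Finset.lt_inf'_iff]
    intro z _; exact half_pos (hdz z)
  · obtain ⟨z, hz⟩ := hFne
    exact lt_of_lt_of_le (htz z) (Finset.le_sup' tz hz)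
  · intro w
    have := hF (Set.mem_univ w)
    rw [Set.mem_iUnion₂] at this
    obtain ⟨z, hzF, hzw⟩ := this
    refine ⟨tz z, htz z, Finset.le_sup' tz hzF, ?_⟩
    exact le_of_lt (lt_of_le_of_lt (Finset.inf'_le _ hzF) hzw)

/-- No small almost-periods: if all small-time displacements are `< r` but
orbits separate by `r`, then near-periods of intermediate size are impossible. -/
lemma no_almost_period (hφ : IsFlow φ) {r c : ℝ} (hc : 0 < c)
    (hsmall : ∀ (z : X) (s : ℝ), |s| ≤ c → dist (φ s z) z < r)
    (hsep : ∀ z : X, ∃ t : ℝ, 0 < t ∧ r ≤ dist (φ t z) z) :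
    ∀ η > 0, ∃ γ > 0, ∀ (w : X) (α : ℝ), η ≤ |α| → |α| ≤ c → γ ≤ dist (φ α w) w := by
  intro η hη
  by_contra hcon
  push_neg at hcon
  have H : ∀ k : ℕ, ∃ (w : X) (α : ℝ), η ≤ |α| ∧ |α| ≤ c ∧ dist (φ α w) w < 1 / (k + 1) := by
    intro k
    obtain ⟨w, α, h1, h2, h3⟩ := hcon (1 / (k + 1)) (by positivity)
    exact ⟨w, α, h1, h2, h3⟩
  choose wf αf h1 h2 h3 using H
  -- extract convergent subsequences
  obtain ⟨w, -, ψ1, hψ1, hw⟩ := isCompact_univ.tendsto_subseq (fun k => Set.mem_univ (wf k))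
  have hαmem : ∀ k, αf (ψ1 k) ∈ Set.Icc (-c) c := by
    intro k
    rcases abs_le.mp (h2 (ψ1 k)) with ⟨ha, hb⟩; exact ⟨ha, hb⟩
  obtain ⟨α, hαI, ψ2, hψ2, hα⟩ := (isCompact_Icc).tendsto_subseq hαmem
  set ψ : ℕ → ℕ := ψ1 ∘ ψ2 with hψ
  have hwψ : Tendsto (fun k => wf (ψ k)) atTop (𝓝 w) := hw.comp hψ2.tendsto_atTop
  have hαψ : Tendsto (fun k => αf (ψ k)) atTop (𝓝 α) := hα
  -- the limit is an exact period
  have hlim : Tendsto (fun k => dist (φ (αf (ψ k)) (wf (ψ k))) (wf (ψ k))) atTop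
      (𝓝 (dist (φ α w) w)) := by
    have h4 : Tendsto (fun k => (αf (ψ k), wf (ψ k))) atTop (𝓝 (α, w)) :=
      hαψ.prodMk_nhds hwψ
    have h5 : Tendsto (fun k => φ (αf (ψ k)) (wf (ψ k))) atTop (𝓝 (φ α w)) :=
      ((flow_cont hφ).tendsto (α, w)).comp h4
    exact h5.dist hwψ
  have hz : dist (φ α w) w = 0 := by
    have hge : Tendsto (fun k : ℕ => 1 / ((ψ k : ℝ) + 1)) atTop (𝓝 0) := by
      apply tendsto_one_div_add_atTop_nhds_zero_nat.comp
      exact hψ1.comp hψ2 |>.tendsto_atTop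
    have := le_of_tendsto_of_tendsto' hlim hge (fun k => le_of_lt (h3 (ψ k)))
    exact le_antisymm this dist_nonneg
  have hper : φ α w = w := by rwa [dist_eq_zero] at hz
  have hηα : η ≤ |α| := by
    have : Tendsto (fun k => |αf (ψ k)|) atTop (𝓝 |α|) := hαψ.abs
    exact ge_of_tendsto this (Filter.Eventually.of_forall (fun k => h1 (ψ k)))
  have hαc : |α| ≤ c := by
    rcases hαI with ⟨ha, hb⟩; exact abs_le.mpr ⟨ha, hb⟩
  have hα0 : α ≠ 0 := by
    intro h; rw [h, abs_zero] at hηα; linarith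
  -- get a positive period β with β ≤ c
  have hperiod : ∃ β : ℝ, 0 < β ∧ β ≤ c ∧ φ β w = w := by
    rcases lt_or_gt_of_ne hα0 with h | h
    · refine ⟨-α, by linarith, ?_, ?_⟩
      · rw [abs_of_neg h] at hαc; exact hαc
      · have h10 := congrArg (φ (-α)) hper
        rw [flow_cancel hφ] at h10
        exact h10.symm
    · refine ⟨α, h, ?_, hper⟩
      rw [abs_of_pos h] at hαc; exact hαc
  obtain ⟨β, hβ0, hβc, hβ⟩ := hperiod
  -- all multiples of β fix w
  have hmul : ∀ n : ℕ, φ (n * β) w = w := by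
    intro n
    induction n with
    | zero => simpa using flow_zero hφ w
    | succ n ih =>
      have : ((n:ℝ) + 1) * β = β + n * β := by ring
      rw [Nat.cast_succ, this, flow_add hφ, ih, hβ]
  -- then every displacement is < r, contradicting separation
  have hall : ∀ t : ℝ, 0 < t → dist (φ t w) w < r := by
    intro t ht
    set n : ℕ := ⌊t / β⌋₊ with hn
    have h6 : (n : ℝ) * β ≤ t := by
      rw [hn]
      calc (⌊t / β⌋₊ : ℝ) * β ≤ (t / β) * β := by
            apply mul_le_mul_of_nonneg_right (Nat.floor_le (by positivity)) (le_of_lt hβ0)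
        _ = t := by field_simp
    have h7 : t - n * β < β := by
      have := Nat.lt_floor_add_one (t / β)
      have h8 : t / β < n + 1 := by rw [hn]; exact this
      have := (div_lt_iff₀ hβ0).mp h8
      linarith
    have h9 : φ t w = φ (t - n * β) w := by
      have h10 : t = (t - n * β) + n * β := by ring
      conv_lhs => rw [h10]
      rw [flow_add hφ, hmul]
    rw [h9]
    apply hsmall
    rw [abs_of_nonneg (by linarith)]
    linarith
  obtain ⟨t, ht0, htr⟩ := hsep w
  exact absurd htr (not_le.mpr (hall t ht0))


/-! ### Piecewise linear reparametrizations built from jump sequences -/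

noncomputable def ramp (u : ℝ) : ℝ := max 0 (min 1 (2 * u - 2⁻¹))

noncomputable def pS (j : ℕ → ℝ) (N : ℕ) (t : ℝ) : ℝ :=
  ∑ k ∈ Finset.range N, j k * ramp (t - k)

noncomputable def S (j : ℕ → ℝ) (t : ℝ) : ℝ := pS j ⌈t⌉₊ t

noncomputable def h2 (j : ℕ → ℝ) (t : ℝ) : ℝ := t - S j t

def rev (j : ℕ → ℝ) (n : ℕ) : ℕ → ℝ := fun m => if m < n then j (n - 1 - m) else 0

lemma ramp_nonneg (u : ℝ) : 0 ≤ ramp u := le_max_left _ _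

lemma ramp_le_one (u : ℝ) : ramp u ≤ 1 :=
  max_le (by norm_num) (min_le_left _ _)

lemma ramp_eq_zero {u : ℝ} (h : u ≤ 4⁻¹) : ramp u = 0 := by
  unfold ramp
  rw [max_eq_left]
  exact le_trans (min_le_right _ _) (by linarith)

lemma ramp_eq_one {u : ℝ} (h : 3 / 4 ≤ u) : ramp u = 1 := by
  unfold ramp
  rw [min_eq_left (by linarith), max_eq_right (by linarith)]

lemma ramp_mid {u : ℝ} (h1 : 4⁻¹ ≤ u) (h2 : u ≤ 3 / 4) : ramp u = 2 * u - 2⁻¹ := by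
  unfold ramp
  rw [min_eq_right (by linarith), max_eq_right (by linarith)]

lemma ramp_lip (u v : ℝ) : |ramp u - ramp v| ≤ 2 * |u - v| := by
  unfold ramp
  have h1 : |max 0 (min 1 (2 * u - 2⁻¹)) - max 0 (min 1 (2 * v - 2⁻¹))| ≤
      |min 1 (2 * u - 2⁻¹) - min 1 (2 * v - 2⁻¹)| := by
    rw [max_comm 0 _, max_comm 0 _]
    exact abs_max_sub_max_le_abs _ _ _
  have h2 : |min 1 (2 * u - 2⁻¹) - min 1 (2 * v - 2⁻¹)| ≤ |(2 * u - 2⁻¹) - (2 * v - 2⁻¹)| := by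
    have := abs_min_sub_min_le_max (1:ℝ) (2 * u - 2⁻¹) 1 (2 * v - 2⁻¹)
    simpa using this
  have h3 : |(2 * u - 2⁻¹) - (2 * v - 2⁻¹)| = 2 * |u - v| := by
    rw [show (2 * u - 2⁻¹) - (2 * v - 2⁻¹) = 2 * (u - v) by ring, abs_mul]
    norm_num
  linarith

lemma ramp_cont : Continuous ramp :=
  continuous_const.max (continuous_const.min (by continuity))

lemma ramp_symm (u : ℝ) : ramp u = 1 - ramp (1 - u) := by
  rcases le_or_gt u 4⁻¹ with h | h
  · rw [ramp_eq_zero h, ramp_eq_one (by linarith)]; ring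
  · rcases le_or_gt (3/4 : ℝ) u with h' | h'
    · rw [ramp_eq_one h', ramp_eq_zero (by linarith)]; ring
    · rw [ramp_mid (le_of_lt h) (le_of_lt h'), ramp_mid (by linarith) (by linarith)]; ring

lemma ramp_term_zero (j : ℕ → ℝ) (k : ℕ) {t : ℝ} (h : t ≤ (k : ℝ)) :
    j k * ramp (t - k) = 0 := by
  rw [ramp_eq_zero (by linarith), mul_zero]

lemma pS_stab (j : ℕ → ℝ) {N : ℕ} {t : ℝ} (h : ⌈t⌉₊ ≤ N) : pS j N t = S j t := by
  unfold S pS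
  symm
  apply Finset.sum_subset (Finset.range_subset_range.mpr h)
  intro k _ hk
  rw [Finset.mem_range, not_lt] at hk
  have : t ≤ (k : ℝ) := le_trans (Nat.le_ceil t) (by exact_mod_cast hk)
  exact ramp_term_zero j k this

lemma S_congr {j j' : ℕ → ℝ} {N : ℕ} {t : ℝ} (hN : ⌈t⌉₊ ≤ N)
    (h : ∀ k, k < N → j k = j' k) : S j t = S j' t := by
  unfold S pS
  apply Finset.sum_congr rfl
  intro k hk
  rw [Finset.mem_range] at hk
  rw [h k (lt_of_lt_of_le hk hN)]

lemma S_small {j : ℕ → ℝ} {t : ℝ} (h : t ≤ 4⁻¹) : S j t = 0 := by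
  unfold S pS
  apply Finset.sum_eq_zero
  intro k _
  have hk : (0:ℝ) ≤ (k:ℝ) := Nat.cast_nonneg k
  rw [ramp_eq_zero (by linarith), mul_zero]

lemma S_block (j : ℕ → ℝ) (n : ℕ) {u : ℝ} (h0 : 0 ≤ u) (h1 : u ≤ 1) :
    S j ((n : ℝ) + u) = (∑ k ∈ Finset.range n, j k) + j n * ramp u := by
  have hN : ⌈(n : ℝ) + u⌉₊ ≤ n + 1 := by
    rw [Nat.ceil_le]; push_cast; linarith
  rw [← pS_stab j hN]
  unfold pS
  rw [Finset.sum_range_succ]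
  congr 1
  · apply Finset.sum_congr rfl
    intro k hk
    rw [Finset.mem_range] at hk
    have : (3:ℝ)/4 ≤ (n : ℝ) + u - k := by
      have : (k : ℝ) + 1 ≤ n := by exact_mod_cast hk
      linarith
    rw [ramp_eq_one this, mul_one]
  · congr 1
    congr 1
    push_cast
    ring

lemma S_int (j : ℕ → ℝ) (n : ℕ) : S j (n : ℝ) = ∑ k ∈ Finset.range n, j k := by
  have := S_block j n (le_refl (0:ℝ)) (by norm_num)
  rw [add_zero] at this
  rw [this, ramp_eq_zero (by norm_num), mul_zero, add_zero]

lemma S_cont (j : ℕ → ℝ) : Continuous (S j) := by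
  rw [continuous_iff_continuousAt]
  intro t₀
  have hN : t₀ < ((⌈t₀⌉₊ + 1 : ℕ) : ℝ) := by
    push_cast
    exact lt_of_le_of_lt (Nat.le_ceil t₀) (by linarith)
  have hev : S j =ᶠ[nhds t₀] pS j (⌈t₀⌉₊ + 1) := by
    have hopen : IsOpen {t : ℝ | t < ((⌈t₀⌉₊ + 1 : ℕ) : ℝ)} := isOpen_Iio
    filter_upwards [hopen.mem_nhds hN] with t ht
    exact (pS_stab j (Nat.ceil_le.mpr (le_of_lt ht))).symm
  apply ContinuousAt.congr _ hev.symm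
  unfold pS
  apply Continuous.continuousAt
  apply continuous_finset_sum
  intro k _
  exact continuous_const.mul (ramp_cont.comp (by continuity))

lemma S_block_diff (j : ℕ → ℝ) {c : ℝ} (hj : ∀ k, |j k| ≤ c) (n : ℕ) {u u' : ℝ}
    (h0 : 0 ≤ u) (h1 : u ≤ u') (h2' : u' ≤ 1) :
    |S j ((n : ℝ) + u') - S j ((n : ℝ) + u)| ≤ 2 * c * (u' - u) := by
  rw [S_block j n h0 (le_trans h1 h2'), S_block j n (le_trans h0 h1) h2']
  have e1 : (∑ k ∈ Finset.range n, j k) + j n * ramp u' -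
      ((∑ k ∈ Finset.range n, j k) + j n * ramp u) = j n * (ramp u' - ramp u) := by ring
  rw [e1, abs_mul]
  calc |j n| * |ramp u' - ramp u| ≤ c * (2 * |u' - u|) := by
        apply mul_le_mul (hj n) (ramp_lip u' u) (abs_nonneg _)
        exact le_trans (abs_nonneg _) (hj n)
    _ = 2 * c * (u' - u) := by
        rw [abs_of_nonneg (by linarith : (0:ℝ) ≤ u' - u)]; ring

lemma S_glob (j : ℕ → ℝ) {c : ℝ} (hj : ∀ k, |j k| ≤ c) :
    ∀ t t' : ℝ, 0 ≤ t → t ≤ t' → |S j t' - S j t| ≤ 2 * c * (t' - t) := by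
  have hc : 0 ≤ c := le_trans (abs_nonneg _) (hj 0)
  have Q : ∀ n : ℕ, ∀ t t' : ℝ, 0 ≤ t → t ≤ t' → t' ≤ n → |S j t' - S j t| ≤ 2 * c * (t' - t) := by
    intro n
    induction n with
    | zero =>
      intro t t' h0 h1 h2'
      have h2'' : t' ≤ 0 := by exact_mod_cast h2'
      have ht : t = t' := le_antisymm h1 (h2''.trans h0)
      rw [ht, sub_self, abs_zero]
      nlinarith
    | succ n ih =>
      intro t t' h0 h1 h2'
      rcases le_or_gt t' n with hn | hn
      · exact ih t t' h0 h1 hn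
      rcases le_or_gt (n : ℝ) t with htn | htn
      · have hd := S_block_diff j hj n (by linarith : (0:ℝ) ≤ t - n) (by linarith : t - n ≤ t' - n)
          (by push_cast at h2' ⊢; linarith : t' - (n:ℝ) ≤ 1)
        rw [(by ring : (n:ℝ) + (t - n) = t), (by ring : (n:ℝ) + (t' - n) = t')] at hd
        calc |S j t' - S j t| ≤ 2 * c * ((t' - n) - (t - n)) := hd
          _ = 2 * c * (t' - t) := by ring
      · have h3 : |S j t' - S j (n : ℝ)| ≤ 2 * c * (t' - n) := by
          have hd := S_block_diff j hj n (le_refl (0:ℝ)) (by linarith : (0:ℝ) ≤ t' - n)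
            (by push_cast at h2' ⊢; linarith : t' - (n:ℝ) ≤ 1)
          rw [(by ring : (n:ℝ) + 0 = (n:ℝ)), (by ring : (n:ℝ) + (t' - n) = t')] at hd
          calc |S j t' - S j (n:ℝ)| ≤ 2 * c * (t' - n - 0) := hd
            _ = 2 * c * (t' - n) := by ring
        have h4 : |S j (n : ℝ) - S j t| ≤ 2 * c * ((n : ℝ) - t) :=
          ih t n h0 (le_of_lt htn) (le_refl _)
        calc |S j t' - S j t| ≤ |S j t' - S j (n:ℝ)| + |S j (n:ℝ) - S j t| := abs_sub_le _ _ _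
          _ ≤ 2 * c * (t' - n) + 2 * c * ((n:ℝ) - t) := by linarith
          _ = 2 * c * (t' - t) := by ring
  intro t t' h0 h1
  exact Q ⌈t'⌉₊ t t' h0 h1 (Nat.le_ceil t')

lemma h2_zero (j : ℕ → ℝ) : h2 j 0 = 0 := by
  unfold h2
  rw [S_small (by norm_num)]
  ring

lemma h2_neg (j : ℕ → ℝ) {t : ℝ} (h : t ≤ 4⁻¹) : h2 j t = t := by
  unfold h2
  rw [S_small h]
  ring

lemma h2_incr (j : ℕ → ℝ) {c : ℝ} (hj : ∀ k, |j k| ≤ c) (hc1 : 2 * c < 1) :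
    ∀ t t' : ℝ, t ≤ t' → (1 - 2 * c) * (t' - t) ≤ h2 j t' - h2 j t := by
  have hc : 0 ≤ c := le_trans (abs_nonneg _) (hj 0)
  have key : ∀ t t' : ℝ, 0 ≤ t → t ≤ t' → (1 - 2 * c) * (t' - t) ≤ h2 j t' - h2 j t := by
    intro t t' h0 h1
    have := S_glob j hj t t' h0 h1
    have h5 := abs_le.mp this
    unfold h2
    nlinarith
  intro t t' h1
  rcases le_or_gt 0 t with h0 | h0
  · exact key t t' h0 h1
  · rcases le_or_gt t' 0 with h2' | h2'
    · rw [h2_neg j (by linarith), h2_neg j (by linarith)]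
      nlinarith
    · have ha := key 0 t' (le_refl _) (le_of_lt h2')
      rw [h2_zero j] at ha
      rw [h2_neg j (by linarith : t ≤ 4⁻¹)]
      nlinarith

lemma h2_decr (j : ℕ → ℝ) {c : ℝ} (hj : ∀ k, |j k| ≤ c) :
    ∀ t t' : ℝ, t ≤ t' → h2 j t' - h2 j t ≤ (1 + 2 * c) * (t' - t) := by
  have hc : 0 ≤ c := le_trans (abs_nonneg _) (hj 0)
  have key : ∀ t t' : ℝ, 0 ≤ t → t ≤ t' → h2 j t' - h2 j t ≤ (1 + 2 * c) * (t' - t) := by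
    intro t t' h0 h1
    have := S_glob j hj t t' h0 h1
    have h5 := abs_le.mp this
    unfold h2
    nlinarith
  intro t t' h1
  rcases le_or_gt 0 t with h0 | h0
  · exact key t t' h0 h1
  · rcases le_or_gt t' 0 with h2' | h2'
    · rw [h2_neg j (by linarith), h2_neg j (by linarith)]
      nlinarith
    · have ha := key 0 t' (le_refl _) (le_of_lt h2')
      rw [h2_zero j] at ha
      rw [h2_neg j (by linarith : t ≤ 4⁻¹)]
      nlinarith

lemma h2_strictMono (j : ℕ → ℝ) {c : ℝ} (hj : ∀ k, |j k| ≤ c) (hc1 : 2 * c < 1) :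
    StrictMono (h2 j) := by
  intro t t' h
  have := h2_incr j hj hc1 t t' (le_of_lt h)
  nlinarith

lemma h2_cont (j : ℕ → ℝ) : Continuous (h2 j) := continuous_id.sub (S_cont j)

lemma h2_surj (j : ℕ → ℝ) {c : ℝ} (hj : ∀ k, |j k| ≤ c) (hc1 : 2 * c < 1) :
    Function.Surjective (h2 j) := by
  apply Continuous.surjective (h2_cont j)
  · apply tendsto_atTop_mono' _ _ (Filter.tendsto_id.const_mul_atTop (by linarith : (0:ℝ) < 1 - 2 * c))
    filter_upwards [Filter.eventually_ge_atTop (0:ℝ)] with t ht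
    have := h2_incr j hj hc1 0 t ht
    rw [h2_zero j] at this
    simpa using this
  · apply Filter.Tendsto.congr' _ Filter.tendsto_id
    filter_upwards [Filter.eventually_le_atBot (0:ℝ)] with t ht
    have h6 : t ≤ 4⁻¹ := by linarith
    simp [h2_neg j h6]

lemma h2_reparam (j : ℕ → ℝ) {c : ℝ} (hj : ∀ k, |j k| ≤ c) (hc1 : 2 * c < 1) :
    Reparam (h2 j) :=
  ⟨h2_strictMono j hj hc1, h2_cont j, h2_surj j hj hc1, h2_zero j⟩

lemma h2_reparamRest (j : ℕ → ℝ) {c : ℝ} (hj : ∀ k, |j k| ≤ c) (hc1 : 2 * c < 1) :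
    ReparamRest (h2 j) :=
  ⟨(h2_strictMono j hj hc1).monotone, h2_cont j, h2_surj j hj hc1, h2_zero j⟩

lemma rev_bound (j : ℕ → ℝ) (n : ℕ) {c : ℝ} (hc : 0 ≤ c) (hj : ∀ k, |j k| ≤ c) :
    ∀ m, |rev j n m| ≤ c := by
  intro m
  unfold rev
  split
  · exact hj _
  · simpa using hc

lemma S_rev (j : ℕ → ℝ) (n : ℕ) {r : ℝ} (h0 : 0 ≤ r) (h1 : r ≤ n) :
    S (rev j n) r = S j (n : ℝ) - S j ((n : ℝ) - r) := by
  have hr : ⌈r⌉₊ ≤ n := Nat.ceil_le.mpr h1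
  have hnr : ⌈(n : ℝ) - r⌉₊ ≤ n := Nat.ceil_le.mpr (by linarith)
  rw [← pS_stab (rev j n) hr, ← pS_stab j hnr, S_int j n]
  unfold pS
  have step1 : ∑ m ∈ Finset.range n, rev j n m * ramp (r - m)
      = ∑ m ∈ Finset.range n, (fun k : ℕ => j k * ramp (r - (n:ℝ) + 1 + k)) (n - 1 - m) := by
    apply Finset.sum_congr rfl
    intro m hm
    rw [Finset.mem_range] at hm
    unfold rev
    rw [if_pos hm]
    have hcast : ((n - 1 - m : ℕ) : ℝ) = (n : ℝ) - 1 - m := by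
      rw [Nat.sub_sub, Nat.cast_sub (by omega : 1 + m ≤ n)]
      push_cast
      ring
    show j (n - 1 - m) * ramp (r - m) = j (n - 1 - m) * ramp (r - (n:ℝ) + 1 + ((n - 1 - m : ℕ) : ℝ))
    rw [hcast]
    congr 1
    congr 1
    ring
  rw [step1, Finset.sum_range_reflect (fun k : ℕ => j k * ramp (r - (n:ℝ) + 1 + k)) n]
  have step3 : ∀ k ∈ Finset.range n,
      j k * ramp (r - (n:ℝ) + 1 + k) = j k - j k * ramp ((n:ℝ) - r - k) := by
    intro k _
    rw [ramp_symm (r - (n:ℝ) + 1 + k)]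
    have e : 1 - (r - (n:ℝ) + 1 + k) = (n:ℝ) - r - k := by ring
    rw [e]
    ring
  rw [Finset.sum_congr rfl step3, Finset.sum_sub_distrib]

/-- Uniform expansiveness: a long enough canonical shadowing forces the endpoint
pair to be approximately on the same orbit with a small time shift. -/
lemma shadow_approx (hφ : IsFlow φ) {e₀ B δ₀ : ℝ} (he₀ : 0 < e₀) (he₁ : e₀ ≤ 8⁻¹)
    (hB0 : 0 < B) (hBδ : B < δ₀)
    (HEXP : ∀ x y : X, ∀ h : ℝ → ℝ, Reparam h →
       (∀ t ≥ (0:ℝ), dist (φ (h t) x) (φ t y) < δ₀) → ∃ s : ℝ, |s| ≤ e₀ ∧ y = φ s x)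
    (γ : ℝ) (hγ : 0 < γ) :
    ∃ N : ℕ, ∀ (p q : X) (j : ℕ → ℝ) (n : ℕ), N ≤ n →
      (∀ m, |j m| ≤ e₀) →
      (∀ r : ℝ, 0 ≤ r → r ≤ (n:ℝ) → dist (φ r p) (φ (h2 j r) q) ≤ B) →
      ∃ s : ℝ, |s| ≤ e₀ ∧ dist q (φ s p) ≤ γ := by
  by_contra hcon
  push_neg at hcon
  choose pf qf jf nf hn hb hband hfar using hcon
  -- extract convergent subsequences
  obtain ⟨p, -, ψ1, hψ1, hp⟩ := isCompact_univ.tendsto_subseq (fun k => Set.mem_univ (pf k))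
  obtain ⟨q, -, ψ2, hψ2, hq⟩ := isCompact_univ.tendsto_subseq
    (fun k => Set.mem_univ (qf (ψ1 k)))
  have hSC : IsSeqCompact (Set.univ : Set (ℕ → Set.Icc (-e₀) e₀)) :=
    isCompact_univ.isSeqCompact
  have hmem : ∀ k m, jf (ψ1 (ψ2 k)) m ∈ Set.Icc (-e₀) e₀ := by
    intro k m
    rcases abs_le.mp (hb (ψ1 (ψ2 k)) m) with ⟨ha, hb'⟩
    exact ⟨ha, hb'⟩
  obtain ⟨j', -, ψ3, hψ3, hj⟩ := hSC
    (x := fun k => (fun m => (⟨jf (ψ1 (ψ2 k)) m, hmem k m⟩ : Set.Icc (-e₀) e₀)))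
    (fun k => Set.mem_univ _)
  set Ψ : ℕ → ℕ := fun k => ψ1 (ψ2 (ψ3 k)) with hΨ
  set jl : ℕ → ℝ := fun m => (j' m : ℝ) with hjl
  have hjlb : ∀ m, |jl m| ≤ e₀ := by
    intro m
    rcases (j' m).2 with ⟨ha, hb'⟩
    exact abs_le.mpr ⟨ha, hb'⟩
  have hpΨ : Filter.Tendsto (fun k => pf (Ψ k)) Filter.atTop (nhds p) :=
    hp.comp ((hψ2.comp hψ3).tendsto_atTop)
  have hqΨ : Filter.Tendsto (fun k => qf (Ψ k)) Filter.atTop (nhds q) :=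
    hq.comp (hψ3.tendsto_atTop)
  have hjm : ∀ m, Filter.Tendsto (fun k => jf (Ψ k) m) Filter.atTop (nhds (jl m)) := by
    intro m
    have h1 := (tendsto_pi_nhds.mp hj) m
    exact (continuous_subtype_val.tendsto (j' m)).comp h1
  have hSm : ∀ r : ℝ, Filter.Tendsto (fun k => S (jf (Ψ k)) r) Filter.atTop (nhds (S jl r)) := by
    intro r
    unfold S pS
    apply tendsto_finset_sum
    intro m _
    exact (hjm m).mul tendsto_const_nhds
  have hh2 : ∀ r : ℝ, Filter.Tendsto (fun k => h2 (jf (Ψ k)) r) Filter.atTop (nhds (h2 jl r)) := by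
    intro r
    unfold h2
    exact tendsto_const_nhds.sub (hSm r)
  have hΨge : ∀ k : ℕ, k ≤ Ψ k := by
    intro k
    calc k ≤ ψ3 k := hψ3.le_apply
      _ ≤ ψ2 (ψ3 k) := hψ2.le_apply
      _ ≤ ψ1 (ψ2 (ψ3 k)) := hψ1.le_apply
  -- the limit band holds for all nonnegative times
  have hbandlim : ∀ r : ℝ, 0 ≤ r → dist (φ r p) (φ (h2 jl r) q) ≤ B := by
    intro r hr
    have hev : ∀ᶠ k in Filter.atTop,
        dist (φ r (pf (Ψ k))) (φ (h2 (jf (Ψ k)) r) (qf (Ψ k))) ≤ B := by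
      filter_upwards [Filter.eventually_ge_atTop ⌈r⌉₊] with k hk
      apply hband (Ψ k) r hr
      calc r ≤ (⌈r⌉₊ : ℝ) := Nat.le_ceil r
        _ ≤ (k : ℝ) := by exact_mod_cast hk
        _ ≤ (Ψ k : ℝ) := by exact_mod_cast hΨge k
        _ ≤ ((nf (Ψ k)) : ℝ) := by exact_mod_cast hn (Ψ k)
    have hlim1 : Filter.Tendsto (fun k => φ r (pf (Ψ k))) Filter.atTop (nhds (φ r p)) :=
      ((flow_cont_t hφ r).tendsto p).comp hpΨ
    have hlim2 : Filter.Tendsto (fun k => φ (h2 (jf (Ψ k)) r) (qf (Ψ k))) Filter.atTop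
        (nhds (φ (h2 jl r) q)) := by
      have h4 : Filter.Tendsto (fun k => (h2 (jf (Ψ k)) r, qf (Ψ k))) Filter.atTop
          (nhds (h2 jl r, q)) := (hh2 r).prodMk_nhds hqΨ
      exact ((flow_cont hφ).tendsto _).comp h4
    exact le_of_tendsto (hlim1.dist hlim2) hev
  -- apply positive expansiveness to the limit
  have hrep : Reparam (h2 jl) := h2_reparam jl hjlb (by linarith)
  obtain ⟨s₀, hs₀, hps⟩ := HEXP q p (h2 jl) hrep (by
    intro t ht
    have := hbandlim t ht
    rw [dist_comm] at this
    linarith)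
  -- contradiction along the subsequence
  have hq0 : q = φ (-s₀) p := by
    rw [hps, flow_cancel hφ]
  have hlim3 : Filter.Tendsto (fun k => dist (qf (Ψ k)) (φ (-s₀) (pf (Ψ k)))) Filter.atTop
      (nhds (dist q (φ (-s₀) p))) := by
    exact hqΨ.dist (((flow_cont_t hφ (-s₀)).tendsto p).comp hpΨ)
  have hzero : dist q (φ (-s₀) p) = 0 := by
    rw [hq0, dist_self]
  have hγ0 : γ ≤ dist q (φ (-s₀) p) := by
    apply ge_of_tendsto hlim3
    filter_upwards with k
    exact le_of_lt (hfar (Ψ k) (-s₀) (by rwa [abs_neg]))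
  rw [hzero] at hγ0
  linarith

lemma S_zero (j : ℕ → ℝ) {N : ℕ} {t : ℝ} (ht : t ≤ (N:ℝ)) (h : ∀ k, k < N → j k = 0) :
    S j t = 0 := by
  unfold S pS
  apply Finset.sum_eq_zero
  intro k hk
  rw [Finset.mem_range] at hk
  rw [h k (lt_of_lt_of_le hk (Nat.ceil_le.mpr ht)), zero_mul]

end PEProof

set_option maxHeartbeats 2000000 in
open PEProof in
theorem main_stability
    {X : Type*} [MetricSpace X] [CompactSpace X] (φ : ℝ → X → X)
    (hφ : IsFlow φ) (hns : ∀ x : X, ¬ IsSingular φ x)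
    (hexp : ∀ ε > (0 : ℝ), ∃ δ > (0 : ℝ), ∀ x y : X, ∀ h : ℝ → ℝ, Reparam h →
      (∀ t ≥ (0 : ℝ), dist (φ (h t) x) (φ t y) < δ) →
      ∃ s : ℝ, |s| ≤ ε ∧ y = φ s x) :
    ∀ ε > (0 : ℝ), ∃ δ > (0 : ℝ), ∀ σ > (0 : ℝ), ∃ T > (0 : ℝ), ∀ x y : X,
      dist x y < δ →
      ∃ h₁ h₂ : ℝ → ℝ, ReparamRest h₁ ∧ ReparamRest h₂ ∧
        (∀ t ≥ (0 : ℝ), dist (φ (-(h₁ t)) x) (φ (-(h₂ t)) y) < ε) ∧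
        (∀ t ≥ (0 : ℝ), T ≤ h₁ t + h₂ t → dist (φ (-(h₁ t)) x) (φ (-(h₂ t)) y) < σ) := by
  intro ε hε
  obtain ⟨r, hr, T₀, hT₀, hsep⟩ := exists_sep hφ hns
  have hsep' : ∀ z : X, ∃ t : ℝ, 0 < t ∧ r ≤ dist (φ t z) z := by
    intro z; obtain ⟨t, h1, _, h3⟩ := hsep z; exact ⟨t, h1, h3⟩
  obtain ⟨θ₁, hθ₁, hθ₁1, hU1⟩ := unif_time hφ (min (r/2) (ε/8)) (by positivity)
  set e₀ : ℝ := min 8⁻¹ (θ₁/4) with he₀def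
  have he₀ : 0 < e₀ := lt_min (by norm_num) (by positivity)
  have he₁ : e₀ ≤ 8⁻¹ := min_le_left _ _
  have he4 : 4 * e₀ ≤ θ₁ := by
    have h5 : e₀ ≤ θ₁/4 := min_le_right _ _
    linarith only [h5]
  have hsmall : ∀ (z : X) (s : ℝ), |s| ≤ 4 * e₀ → dist (φ s z) z < r := by
    intro z s hs
    have := hU1 z s (le_trans hs he4)
    calc dist (φ s z) z < min (r/2) (ε/8) := this
      _ ≤ r/2 := min_le_left _ _
      _ < r := by linarith
  obtain ⟨δ₀, hδ₀, HEXP⟩ := hexp e₀ he₀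
  set B : ℝ := min (δ₀/2) (ε/2) with hBdef
  have hB0 : 0 < B := lt_min (by linarith) (by linarith)
  have hBδ : B < δ₀ := lt_of_le_of_lt (min_le_left _ _) (by linarith)
  have hBε : B ≤ ε/2 := min_le_right _ _
  obtain ⟨θ₂, hθ₂, _, hU2⟩ := unif_time hφ (B/2) (by positivity)
  set η₀ : ℝ := min e₀ θ₂ with hη₀def
  have hη₀ : 0 < η₀ := lt_min he₀ hθ₂
  obtain ⟨γs, hγs, hNU⟩ := no_almost_period hφ (by positivity : (0:ℝ) < 4 * e₀) hsmall hsep' η₀ hη₀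
  set γ₂ : ℝ := min (B/2) (γs/4) with hγ₂def
  have hγ₂ : 0 < γ₂ := lt_min (by positivity) (by positivity)
  obtain ⟨ζ₁, hζ₁, hU3⟩ := unif_space hφ 2 γ₂ (by norm_num) hγ₂
  set γ₁ : ℝ := min ζ₁ (min γ₂ (γs/4)) with hγ₁def
  have hγ₁ : 0 < γ₁ := lt_min hζ₁ (lt_min hγ₂ (by positivity))
  obtain ⟨N₁', hUE1⟩ := shadow_approx hφ he₀ he₁ hB0 hBδ HEXP γ₁ hγ₁
  set N₁ : ℕ := max N₁' 1 with hN₁def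
  have hN₁pos : 0 < (N₁:ℝ) := by
    have : 1 ≤ N₁ := le_max_right _ _
    exact_mod_cast lt_of_lt_of_le one_pos (by exact_mod_cast this)
  obtain ⟨δ', hδ'0, hU4⟩ := unif_space hφ (N₁:ℝ) γ₁ hN₁pos hγ₁
  refine ⟨δ', hδ'0, ?_⟩
  intro σ hσ
  obtain ⟨θ₃, hθ₃, _, hU5⟩ := unif_time hφ (σ/4) (by positivity)
  set ηt : ℝ := min η₀ θ₃ with hηtdef
  have hηt : 0 < ηt := lt_min hη₀ hθ₃
  obtain ⟨γts, hγts, hNUt⟩ := no_almost_period hφ (by positivity : (0:ℝ) < 4 * e₀) hsmall hsep' ηt hηt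
  set γt₂ : ℝ := min γ₂ (min (σ/4) (γts/4)) with hγt₂def
  have hγt₂ : 0 < γt₂ := lt_min hγ₂ (lt_min (by positivity) (by positivity))
  obtain ⟨ζ₂, hζ₂, hU6⟩ := unif_space hφ 2 γt₂ (by norm_num) hγt₂
  set γt₁ : ℝ := min γ₁ (min ζ₂ (γts/4)) with hγt₁def
  have hγt₁ : 0 < γt₁ := lt_min hγ₁ (lt_min hζ₂ (by positivity))
  obtain ⟨Nt', hUE2⟩ := shadow_approx hφ he₀ he₁ hB0 hBδ HEXP γt₁ hγt₁
  set K : ℕ := N₁ + max Nt' 1 with hKdef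
  refine ⟨3 * ((K:ℝ) + 2), by positivity, ?_⟩
  intro x y hxy
  -- the choice of the next jump at an anchor
  have pickEx : ∀ (m : ℕ) (prev : ℕ → ℝ), ∃ s : ℝ, |s| ≤ e₀ ∧
      ((∀ k, |prev k| ≤ e₀) →
       (∀ t : ℝ, 0 ≤ t → t ≤ (m:ℝ) → dist (φ (-t) x) (φ (-(h2 prev t)) y) ≤ B) →
       N₁' ≤ m →
       dist (φ (-(h2 prev (m:ℝ))) y) (φ s (φ (-(m:ℝ)) x)) ≤ (if m < K then γ₁ else γt₁)) := by
    intro m prev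
    by_cases H : (∀ k, |prev k| ≤ e₀) ∧
        (∀ t : ℝ, 0 ≤ t → t ≤ (m:ℝ) → dist (φ (-t) x) (φ (-(h2 prev t)) y) ≤ B) ∧ N₁' ≤ m
    · obtain ⟨H1, H2, H3⟩ := H
      have hrevb : ∀ k, |rev prev m k| ≤ e₀ := rev_bound prev m (le_of_lt he₀) H1
      have hband' : ∀ ρ : ℝ, 0 ≤ ρ → ρ ≤ (m:ℝ) →
          dist (φ ρ (φ (-(m:ℝ)) x)) (φ (h2 (rev prev m) ρ) (φ (-(h2 prev (m:ℝ))) y)) ≤ B := by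
        intro ρ hρ0 hρm
        have e1 : φ ρ (φ (-(m:ℝ)) x) = φ (-((m:ℝ) - ρ)) x := by
          rw [← flow_add hφ]; congr 1; ring
        have e2 : φ (h2 (rev prev m) ρ) (φ (-(h2 prev (m:ℝ))) y)
            = φ (-(h2 prev ((m:ℝ) - ρ))) y := by
          rw [← flow_add hφ]
          congr 1
          unfold h2
          rw [S_rev prev m hρ0 hρm]
          ring
        rw [e1, e2]
        exact H2 ((m:ℝ) - ρ) (by linarith) (by linarith)
      by_cases hmK : m < K
      · obtain ⟨s, hs1, hs2⟩ := hUE1 (φ (-(m:ℝ)) x) (φ (-(h2 prev (m:ℝ))) y)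
          (rev prev m) m H3 hrevb hband'
        exact ⟨s, hs1, fun _ _ _ => by rwa [if_pos hmK]⟩
      · have hN2 : Nt' ≤ m := by
          have h5 : Nt' ≤ K := le_trans (le_max_left _ _) (Nat.le_add_left _ _)
          exact le_trans h5 (not_lt.mp hmK)
        obtain ⟨s, hs1, hs2⟩ := hUE2 (φ (-(m:ℝ)) x) (φ (-(h2 prev (m:ℝ))) y)
          (rev prev m) m hN2 hrevb hband'
        exact ⟨s, hs1, fun _ _ _ => by rwa [if_neg hmK]⟩
    · refine ⟨0, by simpa using le_of_lt he₀, fun h1' h2' h3' => absurd ⟨h1', h2', h3'⟩ H⟩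
  -- recursively defined jumps
  set F : ℕ → ℕ → ℝ := fun n => Nat.rec (motive := fun _ => ℕ → ℝ) (fun _ => 0)
    (fun m prev => Function.update prev m
      (if m < N₁ then 0 else -(pickEx m prev).choose)) n with hFdef
  set J : ℕ → ℝ := fun m => F (m+1) m with hJdef
  have hFsucc : ∀ n, F (n+1) = Function.update (F n) n
      (if n < N₁ then 0 else -(pickEx n (F n)).choose) := fun n => rfl
  have hFb : ∀ n k, |F n k| ≤ e₀ := by
    intro n
    induction n with
    | zero => intro k; simpa [hFdef] using le_of_lt he₀
    | succ n ih =>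
      intro k
      rw [hFsucc n]
      rcases eq_or_ne k n with hkn | hkn
      · subst hkn
        rw [Function.update_self]
        split
        · simpa using le_of_lt he₀
        · rw [abs_neg]; exact (pickEx k (F k)).choose_spec.1
      · rw [Function.update_of_ne hkn]; exact ih k
  have hFstab : ∀ n n' k, k < n → n ≤ n' → F n' k = F n k := by
    intro n n' k hk hn
    induction n' with
    | zero => omega
    | succ n' ih =>
      rcases eq_or_lt_of_le hn with h | h
      · rw [h]
      · have h2' : n ≤ n' := by omega
        rw [hFsucc n', Function.update_of_ne (by omega : k ≠ n')]
        exact ih h2'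
  have hJF : ∀ n k, k < n → J k = F n k := by
    intro n k hk
    rw [hJdef]
    exact (hFstab (k+1) n k (by omega) (by omega)).symm
  have hJb : ∀ m, |J m| ≤ e₀ := fun m => hFb (m+1) m
  have hJzero : ∀ m, m < N₁ → J m = 0 := by
    intro m hm
    rw [hJdef]
    simp only [hFsucc m, Function.update_self]
    rw [if_pos hm]
  have hJval : ∀ m, N₁ ≤ m → J m = -(pickEx m (F m)).choose := by
    intro m hm
    rw [hJdef]
    simp only [hFsucc m, Function.update_self]
    rw [if_neg (not_lt.mpr hm)]
  -- congruence between J and its prefixes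
  have hcong : ∀ (m : ℕ) (t : ℝ), t ≤ (m:ℝ) → h2 (F m) t = h2 J t := by
    intro m t ht
    unfold h2
    rw [S_congr (Nat.ceil_le.mpr ht) (fun k hk => (hJF m k hk).symm)]
  set Dd : ℝ → ℝ := fun t => dist (φ (-t) x) (φ (-(h2 J t)) y) with hDdef
  -- base band
  have hbase : ∀ t : ℝ, 0 ≤ t → t ≤ (N₁:ℝ) → Dd t < γ₁ := by
    intro t ht0 htN
    have hS0 : S J t = 0 := S_zero J htN (fun k hk => hJzero k hk)
    have e1 : h2 J t = t := by unfold h2; rw [hS0]; ring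
    rw [hDdef]
    simp only
    rw [e1]
    exact hU4 x y (-t) (le_of_lt hxy) (by rwa [abs_neg, abs_of_nonneg ht0])
  -- arithmetic relations between the constants
  have hγ₁γ₂ : γ₁ ≤ γ₂ := le_trans (min_le_right _ _) (min_le_left _ _)
  have hγ₂B2 : γ₂ ≤ B/2 := min_le_left _ _
  have hγ₁γs : γ₁ ≤ γs/4 := le_trans (min_le_right _ _) (min_le_right _ _)
  have hγ₂γs : γ₂ ≤ γs/4 := min_le_right _ _
  have hγt₁γ₁ : γt₁ ≤ γ₁ := min_le_left _ _
  have hγt₂γ₂ : γt₂ ≤ γ₂ := min_le_left _ _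
  have hγt₂σ : γt₂ ≤ σ/4 := le_trans (min_le_right _ _) (min_le_left _ _)
  have hγt₁γts : γt₁ ≤ γts/4 := le_trans (min_le_right _ _) (min_le_right _ _)
  have hγt₂γts : γt₂ ≤ γts/4 := le_trans (min_le_right _ _) (min_le_right _ _)
  have hγt₁ζ₂ : γt₁ ≤ ζ₂ := le_trans (min_le_right _ _) (min_le_left _ _)
  have hγ₁ζ₁ : γ₁ ≤ ζ₁ := min_le_left _ _
  have hη₀e : η₀ ≤ e₀ := min_le_left _ _
  have hη₀θ₂ : η₀ ≤ θ₂ := min_le_right _ _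
  have hηtη₀ : ηt ≤ η₀ := min_le_left _ _
  have hηtθ₃ : ηt ≤ θ₃ := min_le_right _ _
  have hKN : N₁ ≤ K := Nat.le_add_right _ _
  -- the main invariant, by induction on blocks
  have INV : ∀ n : ℕ,
      (∀ t : ℝ, 0 ≤ t → t ≤ (N₁:ℝ) + n → Dd t ≤ B) ∧
      (Dd ((N₁:ℝ) + n) ≤ (if N₁ + n ≤ K then γ₂ else γt₂)) ∧
      (∀ t : ℝ, (K:ℝ) + 1 ≤ t → t ≤ (N₁:ℝ) + n → Dd t ≤ γt₂ + σ/4) := by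
    intro n
    induction n with
    | zero =>
      refine ⟨?_, ?_, ?_⟩
      · intro t ht0 htN
        have h5 := hbase t ht0 (by push_cast at htN ⊢; linarith)
        have : γ₁ ≤ B := le_trans hγ₁γ₂ (le_trans hγ₂B2 (by linarith))
        linarith
      · have h5 := hbase ((N₁:ℝ) + 0) (by positivity) (by norm_num)
        rw [if_pos (by omega : N₁ + 0 ≤ K)]
        push_cast
        push_cast at h5
        linarith
      · intro t htK htN
        have hKcast : (N₁:ℝ) ≤ (K:ℝ) := by exact_mod_cast hKN
        push_cast at htN
        linarith
    | succ n ih =>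
      obtain ⟨ih1, ih2, ih3⟩ := ih
      set m : ℕ := N₁ + n with hmdef
      have hmcast : ((m:ℕ):ℝ) = (N₁:ℝ) + n := by rw [hmdef]; push_cast; ring
      have hmN₁ : N₁ ≤ m := Nat.le_add_right _ _
      have H1 : ∀ k, |F m k| ≤ e₀ := hFb m
      have H2 : ∀ t : ℝ, 0 ≤ t → t ≤ (m:ℝ) → dist (φ (-t) x) (φ (-(h2 (F m) t)) y) ≤ B := by
        intro t ht0 htm
        rw [hcong m t htm]
        exact ih1 t ht0 (by rw [← hmcast]; exact htm)
      have H3 : N₁' ≤ m := le_trans (le_trans (le_max_left _ _) (le_refl N₁)) hmN₁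
      set s : ℝ := (pickEx m (F m)).choose with hsdef
      have hs1 : |s| ≤ e₀ := (pickEx m (F m)).choose_spec.1
      have hs2' := (pickEx m (F m)).choose_spec.2 H1 H2 H3
      set P : X := φ (-(m:ℝ)) x with hPdef
      set Q : X := φ (-(h2 J (m:ℝ))) y with hQdef
      have eQ : φ (-(h2 (F m) ((m:ℕ):ℝ))) y = Q := by
        rw [hQdef, hcong m ((m:ℕ):ℝ) le_rfl]
      have hs2C : dist Q (φ s P) ≤ (if m < K then γ₁ else γt₁) := by
        rw [hsdef, hPdef, ← eQ]
        exact hs2'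
      have hold : dist P Q ≤ (if m ≤ K then γ₂ else γt₂) := by
        have h5 := ih2
        simp only [hDdef] at h5
        rw [hPdef, hQdef, hmcast]
        convert h5 using 3 <;> omega
      have hJm : J m = -s := hJval m hmN₁
      -- |s| is small by the no-almost-period lemma
      have hlvl1 : (if m < K then γ₁ else γt₁) ≤ γs/4 := by
        split
        · exact hγ₁γs
        · exact le_trans hγt₁γ₁ hγ₁γs
      have hlvl2 : (if m ≤ K then γ₂ else γt₂) ≤ γs/4 := by
        split
        · exact hγ₂γs
        · exact le_trans hγt₂γ₂ hγ₂γs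
      have hlvlsum : dist (φ s P) P ≤ γs/2 := by
        calc dist (φ s P) P ≤ dist (φ s P) Q + dist Q P := dist_triangle _ _ _
          _ ≤ γs/4 + γs/4 := by
              apply add_le_add
              · rw [dist_comm]; exact le_trans hs2C hlvl1
              · rw [dist_comm]; exact le_trans hold hlvl2
          _ = γs/2 := by ring
      have hsη₀ : |s| < η₀ := by
        by_contra hcon'
        have := hNU P s (not_lt.mp hcon') (le_trans hs1 (by linarith))
        linarith
      have hsηt : K < m → |s| < ηt := by
        intro hKm
        have t1 : dist (φ s P) Q ≤ γts/4 := by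
          rw [dist_comm]
          calc dist Q (φ s P) ≤ (if m < K then γ₁ else γt₁) := hs2C
            _ = γt₁ := if_neg (by omega)
            _ ≤ γts/4 := hγt₁γts
        have t2 : dist Q P ≤ γts/4 := by
          rw [dist_comm]
          calc dist P Q ≤ (if m ≤ K then γ₂ else γt₂) := hold
            _ = γt₂ := if_neg (by omega)
            _ ≤ γts/4 := hγt₂γts
        by_contra hcon'
        have h6 := hNUt P s (not_lt.mp hcon') (le_trans hs1 (by linarith))
        have h7 : dist (φ s P) P ≤ γts/2 := by
          calc dist (φ s P) P ≤ dist (φ s P) Q + dist Q P := dist_triangle _ _ _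
            _ ≤ γts/4 + γts/4 := add_le_add t1 t2
            _ = γts/2 := by ring
        linarith
      -- the gap term bound
      have hgapabs : ∀ u : ℝ, 0 ≤ u → u ≤ 1 → |s * (1 - ramp u)| ≤ |s| := by
        intro u hu0 hu1
        rw [abs_mul]
        have h8 : |1 - ramp u| ≤ 1 := by
          rw [abs_le]
          have h8a := ramp_le_one u
          have h8b := ramp_nonneg u
          constructor
          · linarith only [h8a]
          · linarith only [h8b]
        calc |s| * |1 - ramp u| ≤ |s| * 1 := mul_le_mul_of_nonneg_left h8 (abs_nonneg s)
          _ = |s| := mul_one _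
      have hgapB : ∀ u : ℝ, 0 ≤ u → u ≤ 1 → ∀ z : X, dist (φ (s * (1 - ramp u)) z) z < B/2 := by
        intro u hu0 hu1 z
        apply hU2
        linarith [hgapabs u hu0 hu1]
      have hgapσ : K < m → ∀ u : ℝ, 0 ≤ u → u ≤ 1 → ∀ z : X,
          dist (φ (s * (1 - ramp u)) z) z < σ/4 := by
        intro hKm u hu0 hu1 z
        apply hU5
        have := hsηt hKm
        linarith [hgapabs u hu0 hu1]
      -- the block estimate
      have hDblock : ∀ u : ℝ, 0 ≤ u → u ≤ 1 →
          Dd ((m:ℝ) + u) ≤ dist (φ (s * (1 - ramp u)) (φ (-u) P)) (φ (-u) P)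
            + (if m < K then γ₂ else γt₂) := by
        intro u hu0 hu1
        have e3 : φ (-((m:ℝ) + u)) x = φ (-u) P := by
          rw [hPdef, ← flow_add hφ]; congr 1; ring
        have eS : S J ((m:ℝ) + u) = S J (m:ℝ) + J m * ramp u := by
          rw [S_block J m hu0 hu1, S_int J m]
        have e4 : h2 J ((m:ℝ) + u) = h2 J (m:ℝ) + (u + s * ramp u) := by
          unfold h2
          rw [eS, hJm]
          ring
        have e5 : φ (-(h2 J ((m:ℝ) + u))) y = φ (-(u + s * ramp u)) Q := by
          rw [hQdef, ← flow_add hφ (-(u + s * ramp u)) (-(h2 J (m:ℝ))) y, e4]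
          congr 1
          ring
        have e6 : φ (-(u + s * ramp u)) (φ s P) = φ (s * (1 - ramp u)) (φ (-u) P) := by
          rw [← flow_add hφ (-(u + s * ramp u)) s P, ← flow_add hφ (s * (1 - ramp u)) (-u) P]
          congr 1
          ring
        have step1 : Dd ((m:ℝ) + u) = dist (φ (-u) P) (φ (-(u + s * ramp u)) Q) := by
          simp only [hDdef]
          rw [e3, e5]
        rw [step1]
        calc dist (φ (-u) P) (φ (-(u + s * ramp u)) Q)
            ≤ dist (φ (-u) P) (φ (-(u + s * ramp u)) (φ s P))
              + dist (φ (-(u + s * ramp u)) (φ s P)) (φ (-(u + s * ramp u)) Q) :=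
              dist_triangle _ _ _
          _ ≤ dist (φ (s * (1 - ramp u)) (φ (-u) P)) (φ (-u) P)
              + (if m < K then γ₂ else γt₂) := by
              apply add_le_add
              · rw [e6, dist_comm]
              · have hwb : |(-(u + s * ramp u))| ≤ 2 := by
                  have h8 := ramp_nonneg u
                  have h9 := ramp_le_one u
                  have h11 : |s * ramp u| ≤ e₀ := by
                    rw [abs_mul]
                    calc |s| * |ramp u| ≤ e₀ * 1 :=
                          mul_le_mul hs1 (by rw [abs_of_nonneg h8]; exact h9)
                            (abs_nonneg _) (le_of_lt he₀)
                      _ = e₀ := mul_one _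
                  have h12 := abs_le.mp h11
                  rw [abs_le]
                  constructor
                  · linarith only [hu0, hu1, h12.1, h12.2, he₁]
                  · linarith only [hu0, hu1, h12.1, h12.2, he₁]
                by_cases hmK : m < K
                · rw [if_pos hmK]
                  apply le_of_lt
                  apply hU3 (φ s P) Q _ _ hwb
                  rw [dist_comm]
                  calc dist Q (φ s P) ≤ (if m < K then γ₁ else γt₁) := hs2C
                    _ = γ₁ := if_pos hmK
                    _ ≤ ζ₁ := hγ₁ζ₁
                · rw [if_neg hmK]
                  apply le_of_lt
                  apply hU6 (φ s P) Q _ _ hwb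
                  rw [dist_comm]
                  calc dist Q (φ s P) ≤ (if m < K then γ₁ else γt₁) := hs2C
                    _ = γt₁ := if_neg hmK
                    _ ≤ ζ₂ := hγt₁ζ₂
      -- the anchor estimate at the end of the block
      have hanchor : Dd ((m:ℝ) + 1) ≤ (if m < K then γ₂ else γt₂) := by
        have h9 := hDblock 1 (by norm_num) le_rfl
        have e7 : s * (1 - ramp 1) = 0 := by
          rw [ramp_eq_one (by norm_num)]; ring
        rw [e7, flow_zero hφ, dist_self] at h9
        linarith
      refine ⟨?_, ?_, ?_⟩
      · intro t ht0 htm1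
        rcases le_or_gt t ((N₁:ℝ) + n) with h | h
        · exact ih1 t ht0 h
        · have hu0 : 0 ≤ t - (m:ℝ) := by rw [hmcast]; linarith
          have hu1 : t - (m:ℝ) ≤ 1 := by rw [hmcast]; push_cast at htm1; linarith
          have h9 := hDblock (t - (m:ℝ)) hu0 hu1
          rw [(by ring : (m:ℝ) + (t - (m:ℝ)) = t)] at h9
          have hA := hgapB (t - (m:ℝ)) hu0 hu1 (φ (-(t - (m:ℝ))) P)
          have hB' : (if m < K then γ₂ else γt₂) ≤ γ₂ := by
            split
            · exact le_rfl
            · exact hγt₂γ₂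
          calc Dd t ≤ _ := h9
            _ ≤ B/2 + γ₂ := by linarith
            _ ≤ B/2 + B/2 := by linarith
            _ = B := by ring
      · have e9 : (N₁:ℝ) + ((n+1 : ℕ):ℝ) = (m:ℝ) + 1 := by rw [hmcast]; push_cast; ring
        have e10 : (N₁:ℝ) + ((n:ℝ)+1) = (m:ℝ) + 1 := by rw [hmcast]; ring
        push_cast
        rw [e10]
        by_cases hc1 : N₁ + (n+1) ≤ K
        · rw [if_pos hc1]
          have hmK : m < K := by omega
          calc Dd ((m:ℝ)+1) ≤ (if m < K then γ₂ else γt₂) := hanchor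
            _ = γ₂ := if_pos hmK
        · rw [if_neg hc1]
          have hKm : K ≤ m := by omega
          calc Dd ((m:ℝ)+1) ≤ (if m < K then γ₂ else γt₂) := hanchor
            _ = γt₂ := if_neg (not_lt.mpr hKm)
      · intro t htK htm1
        rcases le_or_gt t ((N₁:ℝ) + n) with h | h
        · exact ih3 t htK h
        · push_cast at htm1
          have hKm' : K ≤ m := by
            have hKR : (K:ℝ) ≤ (m:ℝ) := by rw [hmcast]; linarith
            exact_mod_cast hKR
          rcases lt_or_eq_of_le hKm' with hlt | heq
          · have hu0 : 0 ≤ t - (m:ℝ) := by rw [hmcast]; linarith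
            have hu1 : t - (m:ℝ) ≤ 1 := by rw [hmcast]; linarith
            have h9 := hDblock (t - (m:ℝ)) hu0 hu1
            rw [(by ring : (m:ℝ) + (t - (m:ℝ)) = t)] at h9
            have hA := hgapσ hlt (t - (m:ℝ)) hu0 hu1 (φ (-(t - (m:ℝ))) P)
            have hB' : (if m < K then γ₂ else γt₂) = γt₂ := if_neg (not_lt.mpr hKm')
            rw [hB'] at h9
            linarith
          · have hteq : t = (m:ℝ) + 1 := by
              have hKR : (K:ℝ) = (m:ℝ) := by exact_mod_cast heq
              have : (K:ℝ) + 1 ≤ t := htK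
              rw [hmcast] at hKR ⊢
              linarith [hKR]
            rw [hteq]
            calc Dd ((m:ℝ)+1) ≤ (if m < K then γ₂ else γt₂) := hanchor
              _ = γt₂ := if_neg (by omega)
              _ ≤ γt₂ + σ/4 := by linarith
  -- final assembly
  have hN₁0 : (0:ℝ) ≤ (N₁:ℝ) := Nat.cast_nonneg _
  refine ⟨id, h2 J, ⟨monotone_id, continuous_id, Function.surjective_id, rfl⟩,
    h2_reparamRest J hJb (by linarith only [he₁] : 2 * e₀ < 1), ?_, ?_⟩
  · intro t ht
    have h10 := (INV ⌈t⌉₊).1 t ht (le_trans (Nat.le_ceil t) (by linarith))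
    have hDt : dist (φ (-(id t)) x) (φ (-(h2 J t)) y) = Dd t := by
      simp only [hDdef, id_eq]
    rw [hDt]
    calc Dd t ≤ B := h10
      _ < ε := by linarith only [h10, hBε, hε]
  · intro t ht hsum
    have hSb : |S J t| ≤ 2 * e₀ * t := by
      have h11 := S_glob J hJb 0 t le_rfl ht
      rw [S_small (by norm_num : (0:ℝ) ≤ 4⁻¹)] at h11
      simpa using h11
    have htK1 : (K:ℝ) + 1 ≤ t := by
      have h13 : 2 * e₀ * t ≤ t/4 := by
        have h14 := mul_le_mul_of_nonneg_right he₁ ht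
        linarith only [h14]
      have habs := abs_le.mp hSb
      have h11 : id t + h2 J t ≤ 9*t/4 := by
        simp only [id_eq]
        unfold h2
        linarith only [habs.1, habs.2, h13, ht]
      have hK0 : (0:ℝ) ≤ (K:ℝ) := Nat.cast_nonneg K
      linarith only [hsum, h11, hK0]
    have h12 := (INV ⌈t⌉₊).2.2 t htK1 (le_trans (Nat.le_ceil t) (by linarith))
    have hDt : dist (φ (-(id t)) x) (φ (-(h2 J t)) y) = Dd t := by
      simp only [hDdef, id_eq]
    rw [hDt]
    calc Dd t ≤ γt₂ + σ/4 := h12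
      _ ≤ σ/4 + σ/4 := by linarith only [hγt₂σ]
      _ < σ := by linarith only [hσ]


end PEDev

/-- Uniform asymptotic stability for the inverse flow of a positive expansive flow
without singular points. -/
theorem positive_expansive_uniform_asymptotic_inverse_stability
    {X : Type*} [MetricSpace X] [CompactSpace X] (φ : ℝ → X → X)
    (hφ : IsFlow φ) (hns : ∀ x : X, ¬ IsSingular φ x) (hexp : PosExpansive φ) :
    ∀ ε > (0 : ℝ), ∃ δ > (0 : ℝ), ∀ σ > (0 : ℝ), ∃ T > (0 : ℝ), ∀ x y : X,
      dist x y < δ →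
      ∃ h₁ h₂ : ℝ → ℝ, ReparamRest h₁ ∧ ReparamRest h₂ ∧
        (∀ t ≥ (0 : ℝ), dist (φ (-(h₁ t)) x) (φ (-(h₂ t)) y) < ε) ∧
        (∀ t ≥ (0 : ℝ), T ≤ h₁ t + h₂ t → dist (φ (-(h₁ t)) x) (φ (-(h₂ t)) y) < σ) := by
  exact main_stability φ hφ hns hexp
end

section
/- Let φ be a continuous flow without singular points on a compact metric space X. Then φ is positive expansive if and only if for every ε > 0 there is δ > 0 such that whenever x, y ∈ X satisfy d_F(x,y) < δ, then y = φ_s x for some s with |s| ≤ ε. -/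
open Metric Set

/-- The Fréchet distance between the positive trajectories of two points:
`d_F(x,y) = inf over pairs of reparameterizations with rests of sup over t ≥ 0`. -/
noncomputable def frechetDist {X : Type*} [MetricSpace X] (φ : ℝ → X → X) (x y : X) : ℝ :=
  ⨅ g : {g : (ℝ → ℝ) × (ℝ → ℝ) // ReparamRest g.1 ∧ ReparamRest g.2},
    ⨆ t : Set.Ici (0 : ℝ), dist (φ ((g : (ℝ → ℝ) × (ℝ → ℝ)).1 (t : ℝ)) x)
      (φ ((g : (ℝ → ℝ) × (ℝ → ℝ)).2 (t : ℝ)) y)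

/-!
A reparameterization is in particular one with rests, so a reparameterization keeping the
trajectories `δ/2`-close bounds `d_F` by `δ/2`. Conversely, a pair `(g₁, g₂)` of
reparameterizations with rests nearly realizing `d_F(x, y)` is made strictly increasing by
adding the same small bounded increasing term `c · arctan` to both; since the flow moves every
point uniformly little in short time, this barely changes the distances, and composing with the
inverse of the second one yields a single reparameterization `h` with `d(φ_{h t} x, φ_t y) < δ`.
-/

open Filter Topology

lemma Reparam.reparamRest {h : ℝ → ℝ} (hh : Reparam h) : ReparamRest h :=
  ⟨hh.1.monotone, hh.2.1, hh.2.2.1, hh.2.2.2⟩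

lemma reparamRest_id : ReparamRest (id : ℝ → ℝ) :=
  ⟨monotone_id, continuous_id, Function.surjective_id, rfl⟩

lemma Reparam.comp {h₁ h₂ : ℝ → ℝ} (hh₁ : Reparam h₁) (hh₂ : Reparam h₂) :
    Reparam (h₁ ∘ h₂) :=
  ⟨hh₁.1.comp hh₂.1, hh₁.2.1.comp hh₂.2.1, hh₁.2.2.1.comp hh₂.2.2.1, by
    simp [Function.comp, hh₂.2.2.2, hh₁.2.2.2]⟩

lemma Reparam.nonneg {h : ℝ → ℝ} (hh : Reparam h) {t : ℝ} (ht : 0 ≤ t) : 0 ≤ h t :=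
  hh.2.2.2 ▸ hh.1.monotone ht

lemma Reparam.exists_rightInverse {h : ℝ → ℝ} (hh : Reparam h) :
    ∃ k, Reparam k ∧ ∀ t, h (k t) = t := by
  let e := hh.1.orderIsoOfSurjective h hh.2.2.1
  refine ⟨e.symm, ⟨e.symm.strictMono, e.symm.continuous, e.symm.surjective, ?_⟩,
    e.apply_symm_apply⟩
  rw [OrderIso.symm_apply_eq]
  exact hh.2.2.2.symm

lemma exists_reparam_forall_of_reparam_pair {P : ℝ → ℝ → Prop} {h₁ h₂ : ℝ → ℝ}
    (hh₁ : Reparam h₁) (hh₂ : Reparam h₂) (hP : ∀ t ≥ 0, P (h₁ t) (h₂ t)) :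
    ∃ h, Reparam h ∧ ∀ t ≥ 0, P (h t) t := by
  obtain ⟨k, hk, hh₂k⟩ := hh₂.exists_rightInverse
  refine ⟨h₁ ∘ k, hh₁.comp hk, fun t ht => ?_⟩
  simpa only [Function.comp_apply, hh₂k] using hP (k t) (hk.nonneg ht)

lemma abs_arctan_lt_two (t : ℝ) : |Real.arctan t| < 2 :=
  abs_lt.2 ⟨by linarith [Real.neg_pi_div_two_lt_arctan t, Real.pi_lt_four],
    by linarith [Real.arctan_lt_pi_div_two t, Real.pi_lt_four]⟩

lemma ReparamRest.reparam_add_arctan {g : ℝ → ℝ} (hg : ReparamRest g) {c : ℝ} (hc : 0 < c) :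
    Reparam fun t => g t + c * Real.arctan t := by
  obtain ⟨hmono, hcont, hsurj, h0⟩ := hg
  have hcont' : Continuous fun t => g t + c * Real.arctan t :=
    hcont.add (continuous_const.mul Real.continuous_arctan)
  have hbound : ∀ t, |c * Real.arctan t| ≤ 2 * c := fun t => by
    rw [abs_mul, abs_of_pos hc]
    nlinarith [abs_arctan_lt_two t]
  refine ⟨hmono.add_strictMono (Real.arctan_strictMono.const_mul hc), hcont',
    hcont'.surjective ?_ ?_, by simp [h0]⟩
  · exact tendsto_atTop_add_right_of_le _ (-(2 * c))
      (hmono.tendsto_atTop_atTop fun b => ⟨_, (hsurj b).choose_spec.ge⟩)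
      fun t => (abs_le.1 (hbound t)).1
  · exact tendsto_atBot_add_right_of_ge _ (2 * c)
      (hmono.tendsto_atBot_atBot fun b => ⟨_, (hsurj b).choose_spec.le⟩)
      fun t => (abs_le.1 (hbound t)).2

lemma eventually_forall_dist_flow_lt {X : Type*} [MetricSpace X] [CompactSpace X]
    {φ : ℝ → X → X} (hc : Continuous fun p : ℝ × X => φ p.1 p.2) (h0 : ∀ x, φ 0 x = x)
    {η : ℝ} (hη : 0 < η) : ∀ᶠ t in 𝓝 (0 : ℝ), ∀ u, dist (φ t u) u < η := by
  have := isCompact_univ.eventually_forall_of_forall_eventually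
    (P := fun t u => dist (φ t u) u < η) fun u _ =>
      (hc.dist continuous_snd).continuousAt.eventually
        (gt_mem_nhds (by simpa [h0] using hη : dist (φ 0 u) u < η))
  simpa using this

section Frechet

variable {X : Type*} [MetricSpace X] {φ : ℝ → X → X} {x y : X}

lemma frechetDist_le_of_forall_le {g₁ g₂ : ℝ → ℝ} (hg₁ : ReparamRest g₁)
    (hg₂ : ReparamRest g₂) {c : ℝ} (hc : ∀ t ≥ 0, dist (φ (g₁ t) x) (φ (g₂ t) y) ≤ c) :
    frechetDist φ x y ≤ c :=
  (ciInf_le ⟨0, by rintro _ ⟨g, rfl⟩; exact Real.iSup_nonneg fun _ => dist_nonneg⟩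
    ⟨(g₁, g₂), hg₁, hg₂⟩).trans (ciSup_le fun t => hc t t.2)

-- Boundedness is needed: an unbounded `⨆` over `ℝ` is the junk value `0`.
lemma exists_forall_le_of_frechetDist_lt [BoundedSpace X] {δ : ℝ}
    (hxy : frechetDist φ x y < δ) :
    ∃ g₁ g₂, ReparamRest g₁ ∧ ReparamRest g₂ ∧
      ∃ s < δ, ∀ t ≥ 0, dist (φ (g₁ t) x) (φ (g₂ t) y) ≤ s := by
  have : Nonempty {g : (ℝ → ℝ) × (ℝ → ℝ) // ReparamRest g.1 ∧ ReparamRest g.2} :=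
    ⟨⟨(id, id), reparamRest_id, reparamRest_id⟩⟩
  obtain ⟨⟨⟨g₁, g₂⟩, hg₁, hg₂⟩, hlt⟩ := exists_lt_of_ciInf_lt hxy
  refine ⟨g₁, g₂, hg₁, hg₂, _, hlt, fun t ht => le_ciSup (f := fun t : Ici (0 : ℝ) =>
    dist (φ (g₁ t) x) (φ (g₂ t) y)) ⟨diam (univ : Set X), ?_⟩ ⟨t, ht⟩⟩
  rintro _ ⟨t, rfl⟩
  exact dist_le_diam_of_mem BoundedSpace.bounded_univ (mem_univ _) (mem_univ _)

lemma exists_reparam_pair_dist_lt [CompactSpace X] (hφ : IsFlow φ) {g₁ g₂ : ℝ → ℝ}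
    (hg₁ : ReparamRest g₁) (hg₂ : ReparamRest g₂) {s η : ℝ}
    (hs : ∀ t ≥ 0, dist (φ (g₁ t) x) (φ (g₂ t) y) ≤ s) (hη : 0 < η) :
    ∃ h₁ h₂, Reparam h₁ ∧ Reparam h₂ ∧ ∀ t ≥ 0, dist (φ (h₁ t) x) (φ (h₂ t) y) < s + η := by
  obtain ⟨hc, h0, hadd⟩ := hφ
  obtain ⟨r, hr, hsmall⟩ :=
    Metric.eventually_nhds_iff.1 (eventually_forall_dist_flow_lt hc h0 (half_pos hη))
  refine ⟨_, _, hg₁.reparam_add_arctan (half_pos hr), hg₂.reparam_add_arctan (half_pos hr),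
    fun t ht => ?_⟩
  set p := r / 2 * Real.arctan t
  have hp : dist p 0 < r := by
    rw [Real.dist_eq, sub_zero, abs_mul, abs_of_pos (half_pos hr)]
    nlinarith [abs_arctan_lt_two t]
  rw [add_comm (g₁ t), add_comm (g₂ t), hadd, hadd]
  linarith [dist_triangle4 (φ p (φ (g₁ t) x)) (φ (g₁ t) x) (φ (g₂ t) y) (φ p (φ (g₂ t) y)),
    dist_comm (φ (g₂ t) y) (φ p (φ (g₂ t) y)), hsmall hp (φ (g₁ t) x),
    hsmall hp (φ (g₂ t) y), hs t ht]

lemma exists_reparam_dist_lt_of_frechetDist_lt [CompactSpace X] (hφ : IsFlow φ) {δ : ℝ}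
    (hxy : frechetDist φ x y < δ) :
    ∃ h, Reparam h ∧ ∀ t ≥ 0, dist (φ (h t) x) (φ t y) < δ := by
  obtain ⟨g₁, g₂, hg₁, hg₂, s, hsδ, hs⟩ := exists_forall_le_of_frechetDist_lt hxy
  obtain ⟨h₁, h₂, hh₁, hh₂, hclose⟩ := exists_reparam_pair_dist_lt hφ hg₁ hg₂ hs (sub_pos.2 hsδ)
  simp only [add_sub_cancel] at hclose
  exact exists_reparam_forall_of_reparam_pair (P := fun a b => dist (φ a x) (φ b y) < δ)
    hh₁ hh₂ hclose

end Frechet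

theorem posExpansive_iff_frechet_general
    {X : Type*} [MetricSpace X] [CompactSpace X] (φ : ℝ → X → X)
    (hφ : IsFlow φ) :
    PosExpansive φ ↔
      ∀ ε > (0 : ℝ), ∃ δ > (0 : ℝ), ∀ x y : X, frechetDist φ x y < δ →
        ∃ s : ℝ, |s| ≤ ε ∧ y = φ s x := by
  constructor
  · intro hpe ε hε
    obtain ⟨δ, hδ, hexp⟩ := hpe ε hε
    refine ⟨δ, hδ, fun x y hxy => ?_⟩
    obtain ⟨h, hh, hclose⟩ := exists_reparam_dist_lt_of_frechetDist_lt hφ hxy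
    exact hexp x y h hh hclose
  · intro hfr ε hε
    obtain ⟨δ, hδ, hfr⟩ := hfr ε hε
    refine ⟨δ / 2, half_pos hδ, fun x y h hh hclose => hfr x y ?_⟩
    calc frechetDist φ x y ≤ δ / 2 :=
          frechetDist_le_of_forall_le hh.reparamRest reparamRest_id fun t ht => (hclose t ht).le
      _ < δ := half_lt_self hδ

/-- A flow without singular points is positive expansive iff for all `ε > 0` there is
`δ > 0` such that points at Fréchet distance less than `δ` lie in an `ε`-orbit segment. -/
theorem posExpansive_iff_frechet
    {X : Type*} [MetricSpace X] [CompactSpace X] (φ : ℝ → X → X)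
    (hφ : IsFlow φ) (hns : ∀ x : X, ¬ IsSingular φ x) :
    PosExpansive φ ↔
      ∀ ε > (0 : ℝ), ∃ δ > (0 : ℝ), ∀ x y : X, frechetDist φ x y < δ →
        ∃ s : ℝ, |s| ≤ ε ∧ y = φ s x :=
  posExpansive_iff_frechet_general φ hφ
end

section
/- Let φ be a continuous flow without singular points on a compact metric space X. Then φ is positive expansive if and only if for every ε > 0 there is δ > 0 such that for all x, y ∈ X, if the set T_δ(x,y) is unbounded then y = φ_s x for some s with |s| ≤ ε. -/
open Metric Set

/-- The set `T_ε(x,y)` of pairs of nonnegative times reachable by a pair of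
reparameterizations with rests keeping the trajectories `ε`-close. -/
def Tset {X : Type*} [MetricSpace X] (φ : ℝ → X → X) (ε : ℝ) (x y : X) : Set (ℝ × ℝ) :=
  { p | 0 ≤ p.1 ∧ 0 ≤ p.2 ∧ ∃ (h₁ h₂ : ℝ → ℝ) (s : ℝ),
      ReparamRest h₁ ∧ ReparamRest h₂ ∧ 0 < s ∧
      (∀ t ∈ Set.Icc (0 : ℝ) s, dist (φ (h₁ t) x) (φ (h₂ t) y) ≤ ε) ∧
      h₁ s = p.1 ∧ h₂ s = p.2 }

/-!
Backward direction: a reparameterization `h` keeping the orbits `δ`-close puts `(h s, s)` into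
`T_δ(x, y)` for every `s > 0`.

Forward direction: parameterizing a pair of reparameterizations with rests by total elapsed time
makes both clocks 1-Lipschitz, so by Tychonoff the finite pairings supplied by an unbounded
`T_δ(x, y)` accumulate at a pairing on all of `[0, ∞)`. Compactness and the absence of singular
points give `T, r > 0` such that every orbit moves `r` away from its start within time `T`; for
`δ ≤ r/4` neither clock can then stall, so both run to infinity, and a small strictly increasing
perturbation of each clock turns the pairing into a reparameterization to which positive
expansiveness applies.
-/

open Filter

namespace IsFlow

variable {X : Type*} [MetricSpace X] {φ : ℝ → X → X}

lemma continuous_comp {α : Type*} [TopologicalSpace α] (hφ : IsFlow φ) {f : α → ℝ} {g : α → X}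
    (hf : Continuous f) (hg : Continuous g) : Continuous fun a => φ (f a) (g a) :=
  hφ.1.comp (hf.prodMk hg)

lemma apply_eq_apply_sub (hφ : IsFlow φ) (s t : ℝ) (z : X) : φ s z = φ (s - t) (φ t z) := by
  rw [← hφ.2.2, sub_add_cancel]

lemma exists_pos_apply_ne (hφ : IsFlow φ) {z : X} (hz : ¬ IsSingular φ z) :
    ∃ t > 0, φ t z ≠ z := by
  obtain ⟨t, ht⟩ := not_forall.1 hz
  rcases lt_trichotomy t 0 with htn | rfl | htp
  · refine ⟨-t, neg_pos.2 htn, fun h => ht ?_⟩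
    calc φ t z = φ t (φ (-t) z) := by rw [h]
      _ = z := by rw [← hφ.2.2, add_neg_cancel, hφ.2.1]
  · exact absurd (hφ.2.1 z) ht
  · exact ⟨t, htp, ht⟩

lemma exists_forall_dist_apply_self_lt [CompactSpace X] (hφ : IsFlow φ) {c : ℝ} (hc : 0 < c) :
    ∃ η > 0, ∀ (z : X) (v : ℝ), |v| ≤ η → dist (φ v z) z < c := by
  have hcont : Continuous fun p : ℝ × X => dist (φ p.1 p.2) p.2 := hφ.1.dist continuous_snd
  obtain ⟨η, hη, huc⟩ := Metric.uniformContinuousOn_iff.1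
    ((isCompact_Icc.prod isCompact_univ).uniformContinuousOn_of_continuous
      (s := Icc (-1 : ℝ) 1 ×ˢ univ) hcont.continuousOn) c hc
  refine ⟨min (η / 2) 1, by positivity, fun z v hv => ?_⟩
  have hv1 : v ∈ Icc (-1 : ℝ) 1 := abs_le.1 (hv.trans (min_le_right _ _))
  have hvη : |v| < η := by linarith [min_le_left (η / 2) 1]
  have := huc (v, z) ⟨hv1, mem_univ z⟩ (0, z) ⟨by norm_num, mem_univ z⟩
    (by simpa [Prod.dist_eq, Real.dist_eq] using hvη)
  simpa [Real.dist_eq, hφ.2.1, abs_of_nonneg dist_nonneg] using this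

lemma exists_forall_exists_lt_dist_apply_self [CompactSpace X] (hφ : IsFlow φ)
    (hns : ∀ x : X, ¬ IsSingular φ x) :
    ∃ T > 0, ∃ r > 0, ∀ z : X, ∃ t ∈ Ioc 0 T, r < dist (φ t z) z := by
  let U : ℕ → Set X := fun n =>
    ⋃ t ∈ Ioc (0 : ℝ) (n + 1), {z | 1 / ((n : ℝ) + 1) < dist (φ t z) z}
  have hU_open : ∀ n, IsOpen (U n) := fun n => isOpen_biUnion fun t _ =>
    isOpen_lt continuous_const ((hφ.continuous_comp continuous_const continuous_id).dist
      continuous_id)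
  have hU_mono : Monotone U := fun m n hmn => by
    have hmn' : (m : ℝ) + 1 ≤ n + 1 := by exact_mod_cast Nat.succ_le_succ hmn
    refine biUnion_mono (Ioc_subset_Ioc_right hmn') fun t _ z hz => ?_
    exact lt_of_le_of_lt (one_div_le_one_div_of_le (by positivity) hmn') hz
  have hU_cover : univ ⊆ ⋃ n, U n := fun z _ => by
    obtain ⟨t, ht, htz⟩ := hφ.exists_pos_apply_ne (hns z)
    have hd : 0 < dist (φ t z) z := dist_pos.2 htz
    obtain ⟨n, hn⟩ := exists_nat_gt (max t (1 / dist (φ t z) z))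
    refine mem_iUnion.2 ⟨n, mem_biUnion ⟨ht, by linarith [le_max_left t (1 / dist (φ t z) z)]⟩ ?_⟩
    rw [mem_ofPred_eq, one_div_lt (by positivity) hd]
    linarith [le_max_right t (1 / dist (φ t z) z)]
  obtain ⟨n, hn⟩ := isCompact_univ.elim_directed_cover U hU_open hU_cover hU_mono.directed_le
  refine ⟨n + 1, by positivity, 1 / (n + 1), by positivity, fun z => ?_⟩
  simpa [U] using hn (mem_univ z)

/-- The orbit of `p` gets `r`-far from its position at time `ψ₁ τ` within time `T`, while the
orbit of `q` stays `r/2`-close to its position at time `ψ₂ τ`; two `δ`-pairings cannot bridge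
that gap. -/
lemma sub_le_of_forall_dist_le (hφ : IsFlow φ) {p q : X} {δ η T r : ℝ}
    (hmove : ∀ (z : X) (v : ℝ), |v| ≤ η → dist (φ v z) z < r / 2)
    (hreturn : ∀ z : X, ∃ t ∈ Ioc 0 T, r < dist (φ t z) z) (hδ : δ ≤ r / 4)
    {ψ₁ ψ₂ : ℝ → ℝ} (hψ₁ : Continuous ψ₁) (hψ₂ : Monotone ψ₂)
    (hd : ∀ σ ≥ 0, dist (φ (ψ₁ σ) p) (φ (ψ₂ σ) q) ≤ δ)
    {τ τ' : ℝ} (hτ : 0 ≤ τ) (hττ' : τ ≤ τ') (hψ₂η : ψ₂ τ' - ψ₂ τ ≤ η) :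
    ψ₁ τ' - ψ₁ τ ≤ T := by
  by_contra! hT
  obtain ⟨t, ⟨ht, htT⟩, htr⟩ := hreturn (φ (ψ₁ τ) p)
  obtain ⟨σ, hσ, hψ₁σ⟩ := intermediate_value_Icc hττ' hψ₁.continuousOn
    (show ψ₁ τ + t ∈ Icc (ψ₁ τ) (ψ₁ τ') from ⟨by linarith, by linarith⟩)
  have hp : φ (ψ₁ σ) p = φ t (φ (ψ₁ τ) p) := by
    rw [hφ.apply_eq_apply_sub _ (ψ₁ τ), hψ₁σ, add_sub_cancel_left]
  have hq : dist (φ (ψ₂ σ) q) (φ (ψ₂ τ) q) < r / 2 := by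
    rw [hφ.apply_eq_apply_sub _ (ψ₂ τ)]
    refine hmove _ _ (abs_le.2 ⟨?_, ?_⟩) <;> linarith [hψ₂ hσ.1, hψ₂ hσ.2]
  have hσ₀ := hd σ (hτ.trans hσ.1)
  have hτ₀ := hd τ hτ
  rw [← hp] at htr
  linarith [dist_triangle4 (φ (ψ₁ σ) p) (φ (ψ₂ σ) q) (φ (ψ₂ τ) q) (φ (ψ₁ τ) p),
    dist_comm (φ (ψ₂ τ) q) (φ (ψ₁ τ) p)]

end IsFlow

lemma tendsto_atTop_of_forall_add_le {f : ℝ → ℝ} (hf : Monotone f) {c η : ℝ} (hc : 0 ≤ c)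
    (hη : 0 < η) (hstep : ∀ τ ≥ 0, f τ + η ≤ f (τ + c)) : Tendsto f atTop atTop := by
  have hgrowth : ∀ n : ℕ, f 0 + n * η ≤ f (n * c) := by
    intro n
    induction n with
    | zero => simp
    | succ n ih =>
      have := hstep (n * c) (by positivity)
      push_cast
      rw [add_one_mul, add_one_mul]
      linarith
  refine tendsto_atTop_atTop_of_monotone hf fun b => ?_
  obtain ⟨n, hn⟩ := exists_nat_ge ((b - f 0) / η)
  rw [div_le_iff₀ hη] at hn
  exact ⟨n * c, by linarith [hgrowth n]⟩

lemma eq_of_add_eq_add_of_monotone {α β : Type*} [LinearOrder α] [AddCommMonoid β]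
    [PartialOrder β] [IsOrderedCancelAddMonoid β] {f g : α → β} (hf : Monotone f)
    (hg : Monotone g) {t t' : α} (h : f t + g t = f t' + g t') : f t = f t' := by
  rcases le_total t t' with htt' | htt'
  · have := hg htt'
    exact (hf htt').antisymm (le_of_add_le_add_right (h.symm.le.trans (by gcongr)))
  · have := hg htt'
    exact ((hf htt').antisymm (le_of_add_le_add_right (h.le.trans (by gcongr)))).symm

lemma Monotone.comp_rightInverse_add {α β : Type*} [LinearOrder α] [AddCommMonoid β]
    [PartialOrder β] [IsOrderedAddMonoid β] {f g : α → β} (hf : Monotone f) (hg : Monotone g)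
    {k : β → α} (hk : Function.RightInverse k (f + g)) : Monotone (f ∘ k) := by
  intro τ τ' hττ'
  rcases le_total (k τ) (k τ') with h | h
  · exact hf h
  · have hτ'τ : (f + g) (k τ') ≤ (f + g) (k τ) := (hf.add hg) h
    rw [hk, hk] at hτ'τ
    rw [hττ'.antisymm hτ'τ]

lemma lipschitzWith_one_of_monotone_sub {a : ℝ → ℝ} (ha : Monotone a)
    (ha' : Monotone fun τ => τ - a τ) : LipschitzWith 1 a := by
  refine LipschitzWith.of_le_add fun τ τ' => ?_
  rcases le_total τ τ' with h | h
  · linarith [ha h, dist_nonneg (x := τ) (y := τ')]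
  · have := ha' h
    rw [Real.dist_eq, abs_of_nonneg (sub_nonneg.2 h)]
    linarith

section DiagPairings

variable {X : Type*} [MetricSpace X] {φ : ℝ → X → X} {δ : ℝ} {x y : X}

/-- Pairings of the orbits of `x` and `y` parameterized by total elapsed time: at time `τ` the
orbit of `x` has run for `a τ` and that of `y` for `τ - a τ`. -/
def diagPairings (φ : ℝ → X → X) (δ : ℝ) (x y : X) (L : ℝ) : Set (ℝ → ℝ) :=
  {a | Monotone a ∧ Monotone (fun τ => τ - a τ) ∧ a 0 = 0 ∧
    ∀ τ ∈ Icc 0 L, dist (φ (a τ) x) (φ (τ - a τ) y) ≤ δ}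

lemma diagPairings_antitone : Antitone (diagPairings φ δ x y) :=
  fun _ _ hLL' _ ⟨ha, ha', ha0, hd⟩ => ⟨ha, ha', ha0, fun τ hτ => hd τ ⟨hτ.1, hτ.2.trans hLL'⟩⟩

lemma diagPairings_subset_pi (L : ℝ) :
    diagPairings φ δ x y L ⊆ univ.pi fun τ => Icc (-|τ|) |τ| := by
  rintro a ⟨ha, ha', ha0, -⟩ τ -
  have := (lipschitzWith_one_of_monotone_sub ha ha').dist_le_mul τ 0
  simpa [Real.dist_eq, ha0, abs_le] using this

lemma IsFlow.isClosed_diagPairings (hφ : IsFlow φ) (L : ℝ) :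
    IsClosed (diagPairings φ δ x y L) := by
  have hsub : Continuous fun (a : ℝ → ℝ) τ => τ - a τ :=
    continuous_pi fun τ => continuous_const.sub (continuous_apply τ)
  simp only [diagPairings, ofPred_and, ofPred_forall]
  refine isClosed_monotone.inter ((isClosed_monotone.preimage hsub).inter
    ((isClosed_eq (continuous_apply 0) continuous_const).inter
      (isClosed_iInter fun τ => isClosed_iInter fun _ => isClosed_le ?_ continuous_const)))
  exact (hφ.continuous_comp (continuous_apply τ) continuous_const).dist
    (hφ.continuous_comp (continuous_const.sub (continuous_apply τ)) continuous_const)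

lemma nonempty_diagPairings_of_mem_Tset {p : ℝ × ℝ} (hp : p ∈ Tset φ δ x y) :
    (diagPairings φ δ x y (p.1 + p.2)).Nonempty := by
  obtain ⟨p₁, p₂⟩ := p
  obtain ⟨-, -, h₁, h₂, s, ⟨hm₁, hc₁, hs₁, h₁0⟩, ⟨hm₂, hc₂, hs₂, h₂0⟩, hs, hd, rfl, rfl⟩ := hp
  have htop : ∀ {h : ℝ → ℝ}, Monotone h → Function.Surjective h → Tendsto h atTop atTop :=
    fun hm hs => tendsto_atTop_atTop_of_monotone hm fun b => (hs b).imp fun _ h => h.ge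
  have hbot : ∀ {h : ℝ → ℝ}, Monotone h → Function.Surjective h → Tendsto h atBot atBot :=
    fun hm hs => tendsto_atBot_atBot_of_monotone hm fun b => (hs b).imp fun _ h => h.le
  have hu : Function.Surjective (h₁ + h₂) := (hc₁.add hc₂).surjective
    ((htop hm₁ hs₁).atTop_add_atTop (htop hm₂ hs₂))
    ((hbot hm₁ hs₁).atBot_add_atBot (hbot hm₂ hs₂))
  set t := Function.surjInv hu
  have hsum : Function.RightInverse t (h₁ + h₂) := Function.rightInverse_surjInv hu
  have hsnd : (fun τ => τ - (h₁ ∘ t) τ) = h₂ ∘ t := funext fun τ => by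
    have := hsum τ
    simp only [Function.comp_apply, Pi.add_apply] at this ⊢
    linarith
  have hfiber : ∀ t', h₁ (t (h₁ t' + h₂ t')) = h₁ t' := fun t' =>
    eq_of_add_eq_add_of_monotone hm₁ hm₂ (hsum (h₁ t' + h₂ t'))
  refine ⟨h₁ ∘ t, hm₁.comp_rightInverse_add hm₂ hsum, ?_, ?_, fun τ hτ => ?_⟩
  · rw [hsnd]
    exact hm₂.comp_rightInverse_add hm₁ (add_comm h₁ h₂ ▸ hsum)
  · simpa [h₁0, h₂0] using hfiber 0
  · obtain ⟨t', ht', rfl⟩ := intermediate_value_Icc hs.le (hc₁.add hc₂).continuousOn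
      (by simpa [h₁0, h₂0] using hτ)
    simp only [Function.comp_apply, Pi.add_apply, hfiber, add_sub_cancel_left]
    exact hd t' ht'

lemma nonempty_diagPairings_of_not_isBounded (h : ¬ Bornology.IsBounded (Tset φ δ x y))
    (L : ℝ) : (diagPairings φ δ x y L).Nonempty := by
  obtain ⟨p, hp, hpL⟩ : ∃ p ∈ Tset φ δ x y, L < ‖p‖ := by
    by_contra! hle
    exact h (isBounded_iff_forall_norm_le.2 ⟨L, hle⟩)
  have hnorm : ‖p‖ ≤ p.1 + p.2 := by
    rw [Prod.norm_def, Real.norm_of_nonneg hp.1, Real.norm_of_nonneg hp.2.1]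
    exact max_le (le_add_of_nonneg_right hp.2.1) (le_add_of_nonneg_left hp.1)
  exact (nonempty_diagPairings_of_mem_Tset hp).mono (diagPairings_antitone (by linarith))

lemma IsFlow.exists_forall_mem_diagPairings (hφ : IsFlow φ)
    (h : ¬ Bornology.IsBounded (Tset φ δ x y)) : ∃ a, ∀ L, a ∈ diagPairings φ δ x y L := by
  obtain ⟨a, ha⟩ := IsCompact.nonempty_iInter_of_sequence_nonempty_isCompact_isClosed
    (fun n : ℕ => diagPairings φ δ x y n)
    (fun n => diagPairings_antitone (by push_cast; linarith))
    (fun n => nonempty_diagPairings_of_not_isBounded h n)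
    ((isCompact_univ_pi fun τ => isCompact_Icc).of_isClosed_subset (hφ.isClosed_diagPairings _)
      (diagPairings_subset_pi _))
    (fun n => hφ.isClosed_diagPairings _)
  exact ⟨a, fun L => diagPairings_antitone (Nat.le_ceil L) (mem_iInter.1 ha ⌈L⌉₊)⟩

/-- Without singular points, neither orbit can stall while the other runs on: over each time
window of length `T + η + 1` both clocks advance by more than `η`. -/
lemma IsFlow.exists_tendsto_of_forall_mem_diagPairings [CompactSpace X] (hφ : IsFlow φ)
    (hns : ∀ x : X, ¬ IsSingular φ x) :
    ∃ δ₁ > 0, ∀ δ ≤ δ₁, ∀ (x y : X) (a : ℝ → ℝ), (∀ L, a ∈ diagPairings φ δ x y L) →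
      Tendsto a atTop atTop ∧ Tendsto (fun τ => τ - a τ) atTop atTop := by
  obtain ⟨T, hT, r, hr, hreturn⟩ := hφ.exists_forall_exists_lt_dist_apply_self hns
  obtain ⟨η, hη, hmove⟩ := hφ.exists_forall_dist_apply_self_lt (half_pos hr)
  refine ⟨r / 4, by positivity, fun δ hδ x y a ha => ?_⟩
  obtain ⟨ham, ham', -, -⟩ := ha 0
  have hac : Continuous a := (lipschitzWith_one_of_monotone_sub ham ham').continuous
  have hd : ∀ σ ≥ 0, dist (φ (a σ) x) (φ (σ - a σ) y) ≤ δ :=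
    fun σ hσ => (ha σ).2.2.2 σ ⟨hσ, le_rfl⟩
  have hd' : ∀ σ ≥ 0, dist (φ (σ - a σ) y) (φ (a σ) x) ≤ δ :=
    fun σ hσ => dist_comm (φ (a σ) x) _ ▸ hd σ hσ
  have hc : (0 : ℝ) ≤ T + η + 1 := by positivity
  refine ⟨tendsto_atTop_of_forall_add_le ham hc hη fun τ hτ => ?_,
    tendsto_atTop_of_forall_add_le ham' hc hη fun τ hτ => ?_⟩
  · by_contra! hstall
    have := hφ.sub_le_of_forall_dist_le (ψ₁ := fun σ => σ - a σ) hmove hreturn hδ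
      (continuous_id.sub hac) ham hd' hτ (le_add_of_nonneg_right hc) (by linarith)
    linarith
  · by_contra! hstall
    have := hφ.sub_le_of_forall_dist_le hmove hreturn hδ hac ham' hd hτ
      (le_add_of_nonneg_right hc) (by linarith)
    linarith

end DiagPairings

/-- Extend `a` by the identity on `(-∞, 0]` and add the bounded, strictly increasing
`γ/2 · arctan`. -/
lemma exists_orderIso_abs_sub_le {a : ℝ → ℝ} (ha : Monotone a) (hac : Continuous a)
    (ha0 : a 0 = 0) (hatop : Tendsto a atTop atTop) {γ : ℝ} (hγ : 0 < γ) :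
    ∃ B : ℝ ≃o ℝ, B 0 = 0 ∧ ∀ τ ≥ 0, |B τ - a τ| ≤ γ := by
  have harctan : ∀ τ, |γ / 2 * Real.arctan τ| ≤ γ := fun τ => by
    rw [abs_mul, abs_of_pos (half_pos hγ)]
    have := (abs_lt.2 ⟨Real.neg_pi_div_two_lt_arctan τ, Real.arctan_lt_pi_div_two τ⟩).le
    nlinarith [Real.pi_le_four]
  set b : ℝ → ℝ := fun τ => a (max τ 0) + min τ 0 + γ / 2 * Real.arctan τ
  have hb : StrictMono b := ((ha.comp (monotone_id.max monotone_const)).add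
    (monotone_id.min monotone_const)).add_strictMono
      (Real.arctan_strictMono.const_mul (half_pos hγ))
  have hbc : Continuous b := by fun_prop
  have hbtop : Tendsto b atTop atTop := by
    refine tendsto_atTop_mono' _ ?_ (tendsto_atTop_add_const_right _ (-γ) hatop)
    filter_upwards [eventually_ge_atTop 0] with τ hτ
    have := (abs_le.1 (harctan τ)).1
    simp only [b, max_eq_left hτ, min_eq_right hτ]
    linarith
  have hbbot : Tendsto b atBot atBot := by
    refine tendsto_atBot_mono' _ ?_ (tendsto_atBot_add_const_right _ γ tendsto_id)
    filter_upwards [eventually_le_atBot 0] with τ hτ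
    have := (abs_le.1 (harctan τ)).2
    simp only [b, max_eq_right hτ, min_eq_left hτ, ha0, id]
    linarith
  refine ⟨StrictMono.orderIsoOfSurjective b hb (hbc.surjective hbtop hbbot), ?_, fun τ hτ => ?_⟩
  · simp [b, ha0]
  · simpa [b, hτ, ha0] using harctan τ

lemma reparam_comp_symm {B₁ B₂ : ℝ ≃o ℝ} (hB₁ : B₁ 0 = 0) (hB₂ : B₂ 0 = 0) :
    Reparam (B₁ ∘ B₂.symm) :=
  ⟨B₁.strictMono.comp B₂.symm.strictMono, B₁.continuous.comp B₂.symm.continuous,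
    B₁.surjective.comp B₂.symm.surjective, by simp [B₂.symm_apply_eq.2 hB₂.symm, hB₁]⟩

section Expansive

variable {X : Type*} [MetricSpace X] {φ : ℝ → X → X}

lemma not_isBounded_Tset_of_reparam {δ : ℝ} {x y : X} {h : ℝ → ℝ} (hh : Reparam h)
    (hd : ∀ t ≥ 0, dist (φ (h t) x) (φ t y) < δ) : ¬ Bornology.IsBounded (Tset φ δ x y) := by
  intro hb
  obtain ⟨R, hR⟩ := isBounded_iff_forall_norm_le.1 hb
  have hs : 0 < max R 0 + 1 := by positivity
  have hmem : (h (max R 0 + 1), max R 0 + 1) ∈ Tset φ δ x y := by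
    refine ⟨?_, hs.le, h, id, _, ⟨hh.1.monotone, hh.2.1, hh.2.2.1, hh.2.2.2⟩,
      ⟨monotone_id, continuous_id, Function.surjective_id, rfl⟩, hs,
      fun t ht => (hd t ht.1).le, rfl, rfl⟩
    simpa [hh.2.2.2] using (hh.1 hs).le
  have := (norm_snd_le _).trans (hR _ hmem)
  rw [Real.norm_of_nonneg hs.le] at this
  linarith [le_max_left R 0]

lemma posExpansive_of_forall_not_isBounded_Tset
    (h : ∀ ε > 0, ∃ δ > 0, ∀ x y : X, ¬ Bornology.IsBounded (Tset φ δ x y) →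
      ∃ s : ℝ, |s| ≤ ε ∧ y = φ s x) : PosExpansive φ := fun ε hε => by
  obtain ⟨δ, hδ, hT⟩ := h ε hε
  exact ⟨δ, hδ, fun x y _ hh hd => hT x y (not_isBounded_Tset_of_reparam hh hd)⟩

lemma IsFlow.exists_reparam_of_forall_mem_diagPairings [CompactSpace X] (hφ : IsFlow φ)
    {δ δ₀ : ℝ} (hδ : δ < δ₀) {x y : X} {a : ℝ → ℝ} (ha : ∀ L, a ∈ diagPairings φ δ x y L)
    (hatop : Tendsto a atTop atTop) (ha'top : Tendsto (fun τ => τ - a τ) atTop atTop) :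
    ∃ h, Reparam h ∧ ∀ t ≥ 0, dist (φ (h t) x) (φ t y) < δ₀ := by
  obtain ⟨γ, hγ, hmove⟩ := hφ.exists_forall_dist_apply_self_lt (half_pos (sub_pos.2 hδ))
  obtain ⟨ham, ham', ha0, -⟩ := ha 0
  have hac : Continuous a := (lipschitzWith_one_of_monotone_sub ham ham').continuous
  obtain ⟨B₁, hB₁0, hB₁⟩ := exists_orderIso_abs_sub_le ham hac ha0 hatop hγ
  obtain ⟨B₂, hB₂0, hB₂⟩ :=
    exists_orderIso_abs_sub_le ham' (continuous_id.sub hac) (by simp [ha0]) ha'top hγ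
  refine ⟨B₁ ∘ B₂.symm, reparam_comp_symm hB₁0 hB₂0, fun t ht => ?_⟩
  set τ := B₂.symm t
  have hτ : 0 ≤ τ := by simpa [B₂.symm_apply_eq.2 hB₂0.symm] using B₂.symm.monotone ht
  have hx : dist (φ (B₁ τ) x) (φ (a τ) x) < (δ₀ - δ) / 2 := by
    rw [hφ.apply_eq_apply_sub _ (a τ)]
    exact hmove _ _ (hB₁ τ hτ)
  have hy : dist (φ t y) (φ (τ - a τ) y) < (δ₀ - δ) / 2 := by
    rw [hφ.apply_eq_apply_sub t (τ - a τ), ← B₂.apply_symm_apply t]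
    exact hmove _ _ (hB₂ τ hτ)
  have hpair := (ha τ).2.2.2 τ ⟨hτ, le_rfl⟩
  calc dist (φ (B₁ τ) x) (φ t y)
      ≤ dist (φ (B₁ τ) x) (φ (a τ) x) + dist (φ (a τ) x) (φ (τ - a τ) y)
        + dist (φ (τ - a τ) y) (φ t y) := dist_triangle4 _ _ _ _
    _ < δ₀ := by linarith [dist_comm (φ (τ - a τ) y) (φ t y)]

lemma IsFlow.forall_not_isBounded_Tset_of_posExpansive [CompactSpace X] (hφ : IsFlow φ)
    (hns : ∀ x : X, ¬ IsSingular φ x) (hexp : PosExpansive φ) :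
    ∀ ε > 0, ∃ δ > 0, ∀ x y : X, ¬ Bornology.IsBounded (Tset φ δ x y) →
      ∃ s : ℝ, |s| ≤ ε ∧ y = φ s x := fun ε hε => by
  obtain ⟨δ₀, hδ₀, hexp⟩ := hexp ε hε
  obtain ⟨δ₁, hδ₁, htendsto⟩ := hφ.exists_tendsto_of_forall_mem_diagPairings hns
  refine ⟨min (δ₀ / 2) δ₁, by positivity, fun x y hunb => ?_⟩
  obtain ⟨a, ha⟩ := hφ.exists_forall_mem_diagPairings hunb
  obtain ⟨hatop, ha'top⟩ := htendsto _ (min_le_right _ _) x y a ha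
  obtain ⟨h, hh, hd⟩ := hφ.exists_reparam_of_forall_mem_diagPairings
    ((min_le_left _ _).trans_lt (half_lt_self hδ₀)) ha hatop ha'top
  exact hexp x y h hh hd

end Expansive

/-- A flow without singular points is positive expansive iff for all `ε > 0` there is
`δ > 0` such that unboundedness of `T_δ(x,y)` forces `x` and `y` to lie in an
`ε`-orbit segment. -/
theorem posExpansive_iff_Tset_unbounded
    {X : Type*} [MetricSpace X] [CompactSpace X] (φ : ℝ → X → X)
    (hφ : IsFlow φ) (hns : ∀ x : X, ¬ IsSingular φ x) :
    PosExpansive φ ↔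
      ∀ ε > (0 : ℝ), ∃ δ > (0 : ℝ), ∀ x y : X,
        ¬ Bornology.IsBounded (Tset φ δ x y) →
        ∃ s : ℝ, |s| ≤ ε ∧ y = φ s x :=
  ⟨hφ.forall_not_isBounded_Tset_of_posExpansive hns, posExpansive_of_forall_not_isBounded_Tset⟩
end

section
/- Let φ be a continuous flow on a compact metric space X and τ > 0. If φ has no periodic orbit of period smaller than or equal to 3τ, then the map φ_{Iτ} : X → K(X), φ_{Iτ}(x) = {φ_t x : |t| ≤ τ}, is injective. -/
open Metric Set

/-- The orbit segment `φ_{[−τ,τ]}(x) = {φ_t x : |t| ≤ τ}`. -/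
def orbitSeg {X : Type*} (φ : ℝ → X → X) (τ : ℝ) (x : X) : Set X :=
  (fun t => φ t x) '' Set.Icc (-τ) τ

/-- The distance `d̃(x,y) = d_H(φ_{Iτ}(x), φ_{Iτ}(y))` given by the Hausdorff distance
between orbit segments. -/
noncomputable def segDist {X : Type*} [MetricSpace X] (φ : ℝ → X → X) (τ : ℝ) (x y : X) : ℝ :=
  Metric.hausdorffDist (orbitSeg φ τ x) (orbitSeg φ τ y)

/-- If there is no periodic orbit of period at most `3τ`, then `x ↦ φ_{Iτ}(x)` is
injective. -/
theorem orbitSeg_injective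
    {X : Type*} [MetricSpace X] [CompactSpace X] (φ : ℝ → X → X) (hφ : IsFlow φ)
    (τ : ℝ) (hτ : 0 < τ)
    (hper : ∀ (x : X) (T : ℝ), 0 < T → T ≤ 3 * τ → φ T x = x → IsSingular φ x) :
    Function.Injective (orbitSeg φ τ) := by
  obtain ⟨hc, h0, hadd⟩ := hφ
  have key : ∀ x y : X, ∀ s : ℝ, 0 < s → s ≤ τ → y = φ s x →
      orbitSeg φ τ x = orbitSeg φ τ y → x = y := by
    intro x y s hs hsτ hy hseg
    have hmem : φ τ y ∈ orbitSeg φ τ x := by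
      rw [hseg]; exact ⟨τ, ⟨by linarith, le_refl τ⟩, rfl⟩
    obtain ⟨u, ⟨hu1, hu2⟩, hux⟩ := hmem
    have hux' : φ u x = φ τ y := hux
    have h1 : φ u x = φ (τ + s) x := by rw [hux', hy, ← hadd]
    have hT : φ (τ + s - u) x = x := by
      have h2 := congrArg (φ (-u)) h1
      rw [← hadd, ← hadd, neg_add_cancel, h0] at h2
      rw [show τ + s - u = -u + (τ + s) by ring]
      exact h2.symm
    have hsing := hper x (τ + s - u) (by linarith) (by linarith) hT
    rw [hy, hsing s]
  intro x y hseg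
  have hymem : y ∈ orbitSeg φ τ x := by
    rw [hseg]; exact ⟨0, ⟨by linarith, by linarith⟩, h0 y⟩
  obtain ⟨s, ⟨hs1, hs2⟩, hsx⟩ := hymem
  have hsx' : φ s x = y := hsx
  rcases lt_trichotomy s 0 with h | h | h
  · exact (key y x (-s) (by linarith) (by linarith)
      (by rw [← hsx', ← hadd, neg_add_cancel, h0]) hseg.symm).symm
  · rw [← hsx', h, h0]
  · exact key x y s h hs2 hsx'.symm hseg
end

section
/- Let φ be a continuous flow on a compact metric space X and τ > 0. Suppose φ_{-s}x ≠ x for every x ∈ X and every s ∈ (0, 3τ]. Then there exists τ̃ > 0 such that d(p, φ_{-θ}p) < d(p, φ_{-(θ+2τ)}p) for every p ∈ X and every θ ∈ [0, τ̃]. -/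
open Metric Set

/-- If `φ_{-s} x ≠ x` for all `x` and all `s ∈ (0, 3τ]`, then there is `τ̃ > 0` such
that `d(p, φ_{-θ} p) < d(p, φ_{-(θ+2τ)} p)` for all `p` and all `θ ∈ [0, τ̃]`. -/
theorem exists_small_time_monotonicity
    {X : Type*} [MetricSpace X] [CompactSpace X] (φ : ℝ → X → X) (hφ : IsFlow φ)
    (τ : ℝ) (hτ : 0 < τ)
    (hper : ∀ (x : X) (s : ℝ), 0 < s → s ≤ 3 * τ → φ (-s) x ≠ x) :
    ∃ τ' > (0 : ℝ), ∀ (p : X) (θ : ℝ), θ ∈ Set.Icc (0 : ℝ) τ' →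
      dist p (φ (-θ) p) < dist p (φ (-(θ + 2 * τ)) p) := by
  obtain ⟨hc, h0, hadd⟩ := hφ
  set g : X × ℝ → ℝ := fun q =>
    dist q.1 (φ (-(q.2 + 2 * τ)) q.1) - dist q.1 (φ (-q.2) q.1) with hg
  have hgc : Continuous g := by
    apply Continuous.sub
    · exact continuous_fst.dist
        (hc.comp (((continuous_snd.add continuous_const).neg).prodMk continuous_fst))
    · exact continuous_fst.dist (hc.comp (continuous_snd.neg.prodMk continuous_fst))
  have hU : IsOpen (g ⁻¹' Ioi 0) := hgc.isOpen_preimage _ isOpen_Ioi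
  have hsub : (univ : Set X) ×ˢ ({0} : Set ℝ) ⊆ g ⁻¹' Ioi 0 := by
    rintro ⟨p, θ⟩ ⟨-, hθ⟩
    simp only [mem_singleton_iff] at hθ
    subst hθ
    have h1 : φ (-(0:ℝ)) p = p := by simpa using h0 p
    have h2 : φ (-(0 + 2 * τ)) p ≠ p := by
      have := hper p (0 + 2 * τ) (by linarith) (by linarith)
      simpa using this
    simp only [mem_preimage, mem_Ioi, hg]
    rw [h1, dist_self, sub_zero]
    exact dist_pos.2 fun h => h2 h.symm
  obtain ⟨u, v, -, hvo, hu, h0v, huv⟩ :=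
    generalized_tube_lemma isCompact_univ isCompact_singleton hU hsub
  obtain ⟨ε, hε, hball⟩ := Metric.isOpen_iff.1 hvo 0 (h0v rfl)
  refine ⟨ε / 2, by linarith, fun p θ hθ => ?_⟩
  have hθv : θ ∈ v := by
    apply hball
    rw [mem_ball, Real.dist_eq, sub_zero, abs_of_nonneg hθ.1]
    linarith [hθ.2]
  have : (p, θ) ∈ g ⁻¹' Ioi 0 := by
    exact huv ⟨hu (mem_univ p), hθv⟩
  simpa [hg, sub_pos] using this
end
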